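/- arXiv:2502.07659 — 4 statements merged into one kernel-verified Lean document; each statement's English description precedes it below -/
import Mathlib

section
/- Let α be an irrational real number. Then there exists a strictly increasing sequence (Q_n) of integers Q_n ≥ 2 such that for every n one has Q_n · ψ_α(Q_n − 1) ≥ f₀(Q_n) (equivalently, lim_{t→Q_n⁻} t·ψ_α(t) ≥ f₀(Q_n)). -/
open Filter Real

/-- Distance from a real number to the nearest integer. -/
noncomputable def intDist (ξ : ℝ) : ℝ := |ξ - round ξ|

/-- Irrationality measure function `ψ_α(t) = min {‖qα‖ : q ∈ ℤ, 1 ≤ q ≤ t}`. -/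
noncomputable def psi (α : ℝ) (t : ℝ) : ℝ :=
  sInf {x : ℝ | ∃ q : ℤ, 1 ≤ q ∧ (q : ℝ) ≤ t ∧ x = intDist ((q : ℝ) * α)}

/-- `f₀(x) = (√5 + 1)/(√5 + √(5 - 4/x²))`. -/
noncomputable def f0 (x : ℝ) : ℝ :=
  (Real.sqrt 5 + 1) / (Real.sqrt 5 + Real.sqrt (5 - 4 / x ^ 2))

/-- Value of a finite regular continued fraction `[a₀; a₁, …, aₙ]`. -/
noncomputable def cfVal : List ℤ → ℝ
  | [] => 0
  | [a] => (a : ℝ)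
  | a :: b :: l => (a : ℝ) + 1 / cfVal (b :: l)

/-- The list `[a 0, a 1, …, a n]`. -/
def cfList (a : ℕ → ℤ) (n : ℕ) : List ℤ := (List.range (n + 1)).map a

/-- `α` is the value of the infinite continued fraction with partial quotients `a`,
i.e. the convergents `[a₀; a₁, …, aₙ]` tend to `α`. -/
def IsCFExp (a : ℕ → ℤ) (α : ℝ) : Prop :=
  Filter.Tendsto (fun n => cfVal (cfList a n)) Filter.atTop (nhds α)

/-- Denominators `q_n` of the convergents of the continued fraction with
partial quotients `a` : `q₀ = 1`, `q₁ = a₁`, `q_{n+2} = a_{n+2} q_{n+1} + q_n`. -/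
def cfDen (a : ℕ → ℤ) : ℕ → ℤ
  | 0 => 1
  | 1 => a 1
  | n + 2 => a (n + 2) * cfDen a (n + 1) + cfDen a n

/-- Partial quotients of `α_k = [overline{1_{2k-1}, 2}]` (for `k = 0` this gives
the all-ones sequence, the expansion of the golden ratio `α₀ = φ`). -/
def aSeq (k : ℕ) (n : ℕ) : ℤ := if (n + 1) % (2 * k) = 0 then 2 else 1

/-- Partial quotients of `β_k = [0; 1_{k-1}, overline{2, 1_{2k-1}}]`. -/
def bSeq (k : ℕ) (n : ℕ) : ℤ :=
  if n = 0 then 0 else if n < k then 1 else if (n - k) % (2 * k) = 0 then 2 else 1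

/-- Partial quotients of `β_k^{(1)} = [0; 1_k, overline{2, 1_{2k-1}}]`. -/
def b1Seq (k : ℕ) (n : ℕ) : ℤ :=
  if n = 0 then 0 else if n < k + 1 then 1
  else if (n - (k + 1)) % (2 * k) = 0 then 2 else 1

/-- Partial quotients of `β_k^{(2)} = [0; 1_{k-2}, overline{2, 1_{2k-1}}]`. -/
def b2Seq (k : ℕ) (n : ℕ) : ℤ :=
  if n = 0 then 0 else if n < k - 1 then 1
  else if (n - (k - 1)) % (2 * k) = 0 then 2 else 1

/-- `D_k = (2α_k + 1)/(2α_k + 2)` as a function of `α_k`. -/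
noncomputable def Dk (αk : ℝ) : ℝ := (2 * αk + 1) / (2 * αk + 2)

/-- `g_k(x) = 2D_k/(1 + √(1 - 4D_k(1-D_k)/x²))` as a function of `α_k`. -/
noncomputable def gFun (αk : ℝ) (x : ℝ) : ℝ :=
  2 * Dk αk / (1 + Real.sqrt (1 - 4 * Dk αk * (1 - Dk αk) / x ^ 2))

/-- `f_k` for odd `k`, as a function of `α_k` and `β_k`. -/
noncomputable def fOdd (αk βk : ℝ) (x : ℝ) : ℝ :=
  2 * Dk αk / (1 + Real.sqrt (1 - 2 * αk / ((2 * βk + 1) * (αk + 1) * x ^ 2)))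

/-- `f_k` for even `k`, as a function of `α_k`, `β_k^{(1)}` and `β_k^{(2)}`. -/
noncomputable def fEven (αk β1 β2 : ℝ) (x : ℝ) : ℝ :=
  2 * Dk αk / (1 + Real.sqrt (1 - 2 * αk / ((β1 + β2 + 1) * (αk + 1) * x ^ 2)))

/-- The block `(1_{2k-1}, 2)` of partial quotients. -/
def block (k : ℕ) : List ℤ := List.replicate (2 * k - 1) 1 ++ [2]

/-- `m` repetitions of the block `(1_{2k-1}, 2)`. -/
def blocks (k : ℕ) : ℕ → List ℤ
  | 0 => []
  | m + 1 => block k ++ blocks k m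

/-- Partial quotients of the finite continued fraction `[0; 1_{s-1}, 2, (1_{2k-1}, 2)^m]`. -/
def wFin (k m s : ℕ) : List ℤ := 0 :: (List.replicate (s - 1) 1 ++ [2] ++ blocks k m)

/-- Partial quotients of `[1; 1_{2k-s-1}, overline{2, 1_{2k-1}}]` (for `1 ≤ s ≤ 2k-1`). -/
def wSeq (k s : ℕ) (n : ℕ) : ℤ :=
  if n = 0 then 1
  else if n < 2 * k - s then 1
  else if (n - (2 * k - s)) % (2 * k) = 0 then 2 else 1

/-- Partial quotients of `γ = [overline{2, 1_{2k-1}}]`. -/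
def gSeq (k : ℕ) (n : ℕ) : ℤ := if n % (2 * k) = 0 then 2 else 1

/-- Partial quotients of the finite continued fraction `[0; (1_{2k-1}, 2)^{m+1}]`. -/
def topFin (k m : ℕ) : List ℤ := 0 :: blocks k (m + 1)

/-- Partial quotients of `1/α_k = [0; overline{1_{2k-1}, 2}]`. -/
def invSeq (k : ℕ) (n : ℕ) : ℤ := if n = 0 then 0 else if n % (2 * k) = 0 then 2 else 1
/- ### continued fraction machinery -/

noncomputable def cfa (α : ℝ) : ℕ → ℝ
  | 0 => α
  | n+1 => (cfa α n - ⌊cfa α n⌋)⁻¹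

noncomputable def qd (α : ℝ) : ℕ → ℤ
  | 0 => 0
  | 1 => 1
  | n+2 => ⌊cfa α (n+1)⌋ * qd α (n+1) + qd α n

noncomputable def pd (α : ℝ) : ℕ → ℤ
  | 0 => 1
  | 1 => ⌊cfa α 0⌋
  | n+2 => ⌊cfa α (n+1)⌋ * pd α (n+1) + pd α n

noncomputable def er (α : ℝ) (n : ℕ) : ℝ := (qd α n : ℝ) * α - (pd α n : ℝ)

variable {α : ℝ}

lemma cfa_irr (hα : Irrational α) : ∀ n, Irrational (cfa α n) := by
  intro n
  induction n with
  | zero => exact hα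
  | succ n ih => exact (Irrational.sub_intCast ih _).inv

lemma cfa_succ_gt_one (hα : Irrational α) (n : ℕ) : 1 < cfa α (n+1) := by
  have h1 : Irrational (cfa α n) := cfa_irr hα n
  have h2 : cfa α n - ⌊cfa α n⌋ ≠ 0 := sub_ne_zero.mpr (h1.ne_int _)
  have h3 : 0 < cfa α n - ⌊cfa α n⌋ :=
    lt_of_le_of_ne (sub_nonneg.mpr (Int.floor_le _)) (Ne.symm h2)
  have h4 : cfa α n - ⌊cfa α n⌋ < 1 := by
    have := Int.lt_floor_add_one (cfa α n); linarith
  show 1 < (cfa α n - ⌊cfa α n⌋)⁻¹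
  exact (one_lt_inv₀ h3).mpr h4

lemma cfa_pos (hα : Irrational α) (n : ℕ) : 0 < cfa α (n+1) :=
  lt_trans one_pos (cfa_succ_gt_one hα n)

lemma cfa_rec (hα : Irrational α) (n : ℕ) :
    cfa α n = (⌊cfa α n⌋ : ℝ) + (cfa α (n+1))⁻¹ := by
  have h1 : Irrational (cfa α n) := cfa_irr hα n
  have h2 : cfa α n - ⌊cfa α n⌋ ≠ 0 := sub_ne_zero.mpr (h1.ne_int _)
  show cfa α n = (⌊cfa α n⌋ : ℝ) + ((cfa α n - ⌊cfa α n⌋)⁻¹)⁻¹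
  rw [inv_inv]; ring

lemma floor_cfa_pos (hα : Irrational α) (n : ℕ) : 1 ≤ ⌊cfa α (n+1)⌋ :=
  Int.le_floor.mpr (by exact_mod_cast (cfa_succ_gt_one hα n).le)

lemma qd_nonneg (hα : Irrational α) : ∀ n, 0 ≤ qd α n := by
  intro n
  induction n using Nat.strong_induction_on with
  | _ n ih =>
    match n with
    | 0 => simp [qd]
    | 1 => simp [qd]
    | n+2 =>
      have h1 := ih (n+1) (by omega)
      have h0 := ih n (by omega)
      have := floor_cfa_pos hα n
      show 0 ≤ ⌊cfa α (n+1)⌋ * qd α (n+1) + qd α n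
      nlinarith

lemma qd_pos (hα : Irrational α) : ∀ n, 1 ≤ qd α (n+1) := by
  intro n
  induction n using Nat.strong_induction_on with
  | _ n ih =>
    match n with
    | 0 => simp [qd]
    | n+1 =>
      have h1 := ih n (by omega)
      have h0 := qd_nonneg hα n
      have := floor_cfa_pos hα n
      show 1 ≤ ⌊cfa α (n+1)⌋ * qd α (n+1) + qd α n
      nlinarith

lemma qd_step (hα : Irrational α) (n : ℕ) :
    qd α (n+1) + qd α n ≤ qd α (n+2) := by
  have := floor_cfa_pos hα n
  have := qd_pos hα n
  show qd α (n+1) + qd α n ≤ ⌊cfa α (n+1)⌋ * qd α (n+1) + qd α n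
  nlinarith

lemma qd_lt (hα : Irrational α) (n : ℕ) : qd α (n+2) < qd α (n+3) := by
  have h : qd α (n+2) + qd α (n+1) ≤ qd α (n+3) := qd_step hα (n+1)
  have := qd_pos hα n
  omega

lemma qd_ge (hα : Irrational α) : ∀ n : ℕ, (n : ℤ) + 1 ≤ qd α (n+2) := by
  intro n
  induction n with
  | zero => have := qd_pos hα 1; simpa using this
  | succ n ih =>
    have h : qd α (n+2) + qd α (n+1) ≤ qd α (n+3) := qd_step hα (n+1)
    have := qd_pos hα n
    show ((n:ℤ)+1) + 1 ≤ qd α (n+3)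
    omega

lemma er_zero : er α 0 = -1 := by simp [er, qd, pd]

lemma er_rec (hα : Irrational α) : ∀ n, cfa α (n+1) * er α (n+1) = - er α n := by
  intro n
  induction n with
  | zero =>
    have h1 : Irrational (cfa α 0) := cfa_irr hα 0
    have h2 : cfa α 0 - ⌊cfa α 0⌋ ≠ 0 := sub_ne_zero.mpr (h1.ne_int _)
    show (cfa α 0 - ⌊cfa α 0⌋)⁻¹ * er α 1 = - er α 0
    have : er α 1 = α - ⌊α⌋ := by simp [er, qd, pd, cfa]
    rw [this, er_zero, neg_neg]
    have h0 : cfa α 0 = α := rfl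
    rw [h0] at h2 ⊢
    rw [inv_mul_eq_div, div_eq_one_iff_eq h2]
  | succ n ih =>
    have hrec : er α (n+2) = (⌊cfa α (n+1)⌋ : ℝ) * er α (n+1) + er α n := by
      show (qd α (n+2) : ℝ) * α - (pd α (n+2) : ℝ) = _
      have hq : qd α (n+2) = ⌊cfa α (n+1)⌋ * qd α (n+1) + qd α n := rfl
      have hp : pd α (n+2) = ⌊cfa α (n+1)⌋ * pd α (n+1) + pd α n := rfl
      rw [hq, hp]; push_cast; simp [er]; ring
    have hc : cfa α (n+1) = (⌊cfa α (n+1)⌋ : ℝ) + (cfa α (n+2))⁻¹ := cfa_rec hα (n+1)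
    have hcne : cfa α (n+2) ≠ 0 := ne_of_gt (cfa_pos hα (n+1))
    have hern : er α n = - (cfa α (n+1) * er α (n+1)) := by linarith [ih]
    have hinv : cfa α (n+2) * (cfa α (n+2))⁻¹ = 1 := mul_inv_cancel₀ hcne
    linear_combination (cfa α (n+2)) * hrec + (cfa α (n+2)) * hern -
      (cfa α (n+2) * er α (n+1)) * hc - (er α (n+1)) * hinv

lemma er_ne (hα : Irrational α) : ∀ n, er α n ≠ 0 := by
  intro n
  induction n with
  | zero => rw [er_zero]; norm_num
  | succ n ih =>
    intro h
    have := er_rec hα n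
    rw [h, mul_zero] at this
    exact ih (by linarith)

lemma er_succ (hα : Irrational α) (n : ℕ) :
    er α (n+1) = - er α n / cfa α (n+1) := by
  have h := er_rec hα n
  have hc : cfa α (n+1) ≠ 0 := ne_of_gt (cfa_pos hα n)
  field_simp
  linarith

/-- key identity: `er (n+1) * (cfa (n+1) * qd (n+1) + qd n) = (-1)^n` -/
lemma er_formula (hα : Irrational α) :
    ∀ n, er α (n+1) * (cfa α (n+1) * qd α (n+1) + qd α n) = (-1)^n := by
  intro n
  induction n with
  | zero =>
    have h1 : Irrational (cfa α 0) := cfa_irr hα 0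
    have h2 : α - (⌊α⌋:ℝ) ≠ 0 := sub_ne_zero.mpr (h1.ne_int _)
    have he : er α 1 = α - ⌊α⌋ := by simp [er, qd, pd, cfa]
    have hc : cfa α 1 = (α - (⌊α⌋:ℝ))⁻¹ := rfl
    have hq1 : (qd α 1 : ℝ) = 1 := by norm_num [qd]
    have hq0 : (qd α 0 : ℝ) = 0 := by norm_num [qd]
    rw [he, hc, hq1, hq0, mul_one, add_zero, pow_zero]
    exact mul_inv_cancel₀ h2
  | succ n ih =>
    have hcne : cfa α (n+2) ≠ 0 := ne_of_gt (cfa_pos hα (n+1))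
    have hinv : cfa α (n+2) * (cfa α (n+2))⁻¹ = 1 := mul_inv_cancel₀ hcne
    have hc : cfa α (n+1) = (⌊cfa α (n+1)⌋:ℝ) + (cfa α (n+2))⁻¹ := cfa_rec hα (n+1)
    have hq : (qd α (n+2) : ℝ) = (⌊cfa α (n+1)⌋:ℝ) * qd α (n+1) + qd α n := by
      have : qd α (n+2) = ⌊cfa α (n+1)⌋ * qd α (n+1) + qd α n := rfl
      rw [this]; push_cast; ring
    have hX : cfa α (n+2) * (cfa α (n+1) * qd α (n+1) + qd α n)
        = cfa α (n+2) * (qd α (n+2):ℝ) + qd α (n+1) := by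
      rw [hq]
      linear_combination (cfa α (n+2) * (qd α (n+1):ℝ)) * hc + ((qd α (n+1):ℝ)) * hinv
    have hrec2 : cfa α (n+2) * er α (n+2) = - er α (n+1) := er_rec hα (n+1)
    calc er α (n+2) * (cfa α (n+2) * (qd α (n+2):ℝ) + qd α (n+1))
        = (cfa α (n+2) * er α (n+2)) * (cfa α (n+1) * qd α (n+1) + qd α n) := by
          rw [← hX]; ring
      _ = (-er α (n+1)) * (cfa α (n+1) * qd α (n+1) + qd α n) := by rw [hrec2]
      _ = (-1)^(n+1) := by linear_combination -ih

lemma det_formula : ∀ n, pd α (n+1) * qd α n - pd α n * qd α (n+1) = (-1)^(n+1) := by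
  intro n
  induction n with
  | zero => simp [pd, qd]
  | succ n ih =>
    have hq : qd α (n+2) = ⌊cfa α (n+1)⌋ * qd α (n+1) + qd α n := rfl
    have hp : pd α (n+2) = ⌊cfa α (n+1)⌋ * pd α (n+1) + pd α n := rfl
    rw [hq, hp]
    have h2 : (-1:ℤ)^(n+2) = -(-1)^(n+1) := by ring
    rw [h2]
    linear_combination -ih

/-- best approximation property -/
lemma best_approx (hα : Irrational α) (n : ℕ) (q p : ℤ) (hq1 : 1 ≤ q)
    (hq2 : q < qd α (n+2)) : |er α (n+1)| ≤ |(q:ℝ) * α - p| := by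
  obtain ⟨ε, hdet, hee⟩ : ∃ ε : ℤ,
      pd α (n+2) * qd α (n+1) - pd α (n+1) * qd α (n+2) = ε ∧ ε * ε = 1 := by
    refine ⟨(-1)^(n+2), det_formula (n+1), ?_⟩
    rcases Nat.even_or_odd (n+2) with h | h
    · rw [h.neg_one_pow]; norm_num
    · rw [h.neg_one_pow]; norm_num
  set x : ℤ := ε * (q * pd α (n+2) - p * qd α (n+2)) with hxdef
  set y : ℤ := ε * (p * qd α (n+1) - q * pd α (n+1)) with hydef
  have hxq : x * qd α (n+1) + y * qd α (n+2) = q := by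
    rw [hxdef, hydef]
    linear_combination (ε * q) * hdet + q * hee
  have hxp : x * pd α (n+1) + y * pd α (n+2) = p := by
    rw [hxdef, hydef]
    linear_combination (ε * p) * hdet + p * hee
  have h1 : (x:ℝ) * (qd α (n+1):ℝ) + (y:ℝ) * (qd α (n+2):ℝ) = (q:ℝ) := by
    exact_mod_cast hxq
  have h2 : (x:ℝ) * (pd α (n+1):ℝ) + (y:ℝ) * (pd α (n+2):ℝ) = (p:ℝ) := by
    exact_mod_cast hxp
  have herr : (q:ℝ) * α - p = x * er α (n+1) + y * er α (n+2) := by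
    simp only [er]
    linear_combination (-α) * h1 + h2
  have hc : cfa α (n+2) ≠ 0 := ne_of_gt (cfa_pos hα (n+1))
  have hcg : 1 < cfa α (n+2) := cfa_succ_gt_one hα (n+1)
  have hcpos : 0 < cfa α (n+2) := lt_trans one_pos hcg
  have hes : er α (n+2) = - er α (n+1) / cfa α (n+2) := er_succ hα (n+1)
  have hfact : (q:ℝ) * α - p = er α (n+1) * ((x:ℝ) - (y:ℝ)/cfa α (n+2)) := by
    rw [herr, hes]; field_simp; ring
  have hqd1 : 1 ≤ qd α (n+1) := qd_pos hα n
  have hqd2 : 1 ≤ qd α (n+2) := qd_pos hα (n+1)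
  have hkey : 1 ≤ |(x:ℝ) - (y:ℝ)/cfa α (n+2)| := by
    rcases lt_trichotomy y 0 with hy | hy | hy
    · rcases lt_trichotomy x 0 with hx | hx | hx
      · exfalso
        have hx' : x ≤ -1 := by omega
        have hy' : y ≤ -1 := by omega
        nlinarith [hxq, hqd1, hqd2]
      · exfalso; rw [hx] at hxq; simp at hxq
        have hy' : y ≤ -1 := by omega
        nlinarith [hqd2]
      · have hx' : (1:ℝ) ≤ (x:ℝ) := by exact_mod_cast hx
        have hy' : (y:ℝ) ≤ -1 := by
          have : y ≤ -1 := by omega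
          exact_mod_cast this
        have hpos : 0 < (-(y:ℝ))/cfa α (n+2) :=
          div_pos (by linarith) hcpos
        have heq : (x:ℝ) - (y:ℝ)/cfa α (n+2) = (x:ℝ) + (-(y:ℝ))/cfa α (n+2) := by
          ring
        have : (1:ℝ) ≤ (x:ℝ) - (y:ℝ)/cfa α (n+2) := by rw [heq]; linarith
        exact le_trans this (le_abs_self _)
    · have hx : x ≠ 0 := by
        intro h; rw [h, hy] at hxq; simp at hxq; omega
      have : (1:ℝ) ≤ |(x:ℝ)| := by
        rw [← Int.cast_abs]; exact_mod_cast Int.one_le_abs hx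
      rw [hy]; simpa using this
    · rcases lt_trichotomy x 0 with hx | hx | hx
      · have hx' : (x:ℝ) ≤ -1 := by
          have : x ≤ -1 := by omega
          exact_mod_cast this
        have hy' : (1:ℝ) ≤ (y:ℝ) := by exact_mod_cast hy
        have hpos : 0 < (y:ℝ)/cfa α (n+2) := div_pos (by linarith) hcpos
        have : (x:ℝ) - (y:ℝ)/cfa α (n+2) ≤ -1 := by linarith
        rw [abs_sub_comm]
        have h3 : (1:ℝ) ≤ (y:ℝ)/cfa α (n+2) - (x:ℝ) := by linarith
        exact le_trans h3 (le_abs_self _)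
      · exfalso; rw [hx] at hxq; simp at hxq
        have hy' : 1 ≤ y := by omega
        nlinarith [hqd2]
      · exfalso
        have hx' : 1 ≤ x := by omega
        have hy' : 1 ≤ y := by omega
        nlinarith [hxq, hqd1, hqd2]
  calc |er α (n+1)| = |er α (n+1)| * 1 := by ring
    _ ≤ |er α (n+1)| * |(x:ℝ) - (y:ℝ)/cfa α (n+2)| :=
        mul_le_mul_of_nonneg_left hkey (abs_nonneg _)
    _ = |(q:ℝ) * α - p| := by rw [hfact, abs_mul]

lemma psi_ge (hα : Irrational α) (n : ℕ) (h2 : 2 ≤ qd α (n+2)) :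
    |er α (n+1)| ≤ psi α ((qd α (n+2) : ℝ) - 1) := by
  apply le_csInf
  · refine ⟨intDist (((1:ℤ):ℝ) * α), 1, le_refl 1, ?_, rfl⟩
    have h2' : (2:ℝ) ≤ (qd α (n+2):ℝ) := by exact_mod_cast h2
    push_cast
    linarith
  · rintro b ⟨q, hq1, hqle, rfl⟩
    have hqlt : q < qd α (n+2) := by
      have : (q:ℝ) ≤ (qd α (n+2):ℝ) - 1 := hqle
      have : (q:ℝ) < (qd α (n+2):ℝ) := by linarith
      exact_mod_cast this
    exact best_approx hα n q (round ((q:ℝ)*α)) hq1 hqlt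

/-- the final analytic inequality -/
lemma fin_ineq (t Q : ℝ) (hQ : 2 ≤ Q) (ht0 : 0 < t)
    (h : t^2/Q^2 ≤ (t - (3+Real.sqrt 5)/2)*(t+1)) : f0 Q ≤ t/(t+1) := by
  have h5 : Real.sqrt 5 ^ 2 = 5 := Real.sq_sqrt (by norm_num)
  have h5pos : 0 < Real.sqrt 5 := Real.sqrt_pos.mpr (by norm_num)
  have hQ0 : 0 < Q := by linarith
  have harg : (0:ℝ) ≤ 5 - 4/Q^2 := by
    have : 4/Q^2 ≤ 1 := by
      rw [div_le_one (by positivity)]; nlinarith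
    linarith
  have hs0 : 0 ≤ Real.sqrt (5 - 4/Q^2) := Real.sqrt_nonneg _
  have hden : 0 < Real.sqrt 5 + Real.sqrt (5 - 4/Q^2) := by linarith
  rw [f0, div_le_div_iff₀ hden (by linarith)]
  -- goal : (√5+1)*(t+1) ≤ (√5 + √(5-4/Q²))*t
  have hsq : (t + Real.sqrt 5 + 1)^2 ≤ (5 - 4/Q^2) * t^2 := by
    have hexpand : (5 - 4/Q^2)*t^2 - (t + Real.sqrt 5 + 1)^2
        = 4*((t - (3+Real.sqrt 5)/2)*(t+1) - t^2/Q^2) := by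
      linear_combination (-1 : ℝ) * h5
    linarith [hexpand, h]
  have hst : t + Real.sqrt 5 + 1 ≤ Real.sqrt (5 - 4/Q^2) * t := by
    have h1 : Real.sqrt (5 - 4/Q^2) * t = Real.sqrt ((5 - 4/Q^2) * t^2) := by
      rw [Real.sqrt_mul harg, Real.sqrt_sq ht0.le]
    have h2 : t + Real.sqrt 5 + 1 = Real.sqrt ((t + Real.sqrt 5 + 1)^2) := by
      rw [Real.sqrt_sq (by positivity)]
    rw [h1, h2]
    exact Real.sqrt_le_sqrt hsq
  nlinarith [hst]

lemma key_lemma (hα : Irrational α) (n : ℕ) (h2 : 2 ≤ qd α (n+2))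
    (hcond : (cfa α (n+2) * (qd α (n+2):ℝ) / (qd α (n+1):ℝ))^2 / ((qd α (n+2):ℝ))^2
       ≤ (cfa α (n+2) * (qd α (n+2):ℝ) / (qd α (n+1):ℝ) - (3+Real.sqrt 5)/2)
         * (cfa α (n+2) * (qd α (n+2):ℝ) / (qd α (n+1):ℝ) + 1)) :
    f0 ((qd α (n+2):ℝ)) ≤ (qd α (n+2):ℝ) * psi α ((qd α (n+2):ℝ) - 1) := by
  have hqr : (1:ℝ) ≤ (qd α (n+1):ℝ) := by exact_mod_cast qd_pos hα n
  have hQr : (2:ℝ) ≤ (qd α (n+2):ℝ) := by exact_mod_cast h2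
  have hq0 : (0:ℝ) ≤ (qd α n:ℝ) := by exact_mod_cast qd_nonneg hα n
  have hcg : 1 < cfa α (n+2) := cfa_succ_gt_one hα (n+1)
  have hcpos : 0 < cfa α (n+2) := lt_trans one_pos hcg
  have hcne : cfa α (n+2) ≠ 0 := ne_of_gt hcpos
  have hc1g : 1 < cfa α (n+1) := cfa_succ_gt_one hα n
  set c := cfa α (n+2) with hcdef
  set Qr := (qd α (n+2):ℝ) with hQdef
  set qr := (qd α (n+1):ℝ) with hqdef
  set t := c * Qr / qr with htdef
  have ht0 : 0 < t := by
    apply div_pos (mul_pos hcpos (by linarith)) (by linarith)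
  have hf : f0 Qr ≤ t/(t+1) := fin_ineq t Qr hQr ht0 hcond
  -- compute Qr * |er α (n+1)| = t/(t+1)
  set D : ℝ := cfa α (n+1) * qr + (qd α n : ℝ) with hDdef
  have hDpos : 0 < D := by
    have : 0 < cfa α (n+1) * qr := mul_pos (by linarith) (by linarith)
    rw [hDdef]; linarith
  have hform : er α (n+1) * D = (-1)^n := er_formula hα n
  have habs : |er α (n+1)| * D = 1 := by
    have h1 : |er α (n+1) * D| = |((-1:ℝ))^n| := by rw [hform]
    rw [abs_mul, abs_of_pos hDpos] at h1
    rw [h1]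
    rcases Nat.even_or_odd n with h | h
    · rw [h.neg_one_pow]; norm_num
    · rw [h.neg_one_pow]; norm_num
  have hinv : c * c⁻¹ = 1 := mul_inv_cancel₀ hcne
  have hcr : cfa α (n+1) = (⌊cfa α (n+1)⌋:ℝ) + c⁻¹ := cfa_rec hα (n+1)
  have hqcast : Qr = (⌊cfa α (n+1)⌋:ℝ) * qr + (qd α n : ℝ) := by
    rw [hQdef, hqdef]
    have : qd α (n+2) = ⌊cfa α (n+1)⌋ * qd α (n+1) + qd α n := rfl
    rw [this]; push_cast; ring
  have hX : c * D = c * Qr + qr := by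
    rw [hDdef, hqcast]
    linear_combination (c * qr) * hcr + qr * hinv
  have habs' : |er α (n+1)| = 1 / D := by
    field_simp at habs ⊢
    linarith [habs]
  have heq : Qr * |er α (n+1)| = t / (t+1) := by
    rw [habs', htdef]
    have hqrne : qr ≠ 0 := by linarith
    have hDne : D ≠ 0 := ne_of_gt hDpos
    have htp : c * Qr / qr + 1 = (c * D) / qr := by
      rw [hX]; field_simp
    rw [htp, div_div_div_cancel_right₀, mul_one_div,
      div_eq_div_iff hDne (ne_of_gt (mul_pos hcpos hDpos))]
    · ring
    · exact hqrne
  have hpsi : |er α (n+1)| ≤ psi α (Qr - 1) := psi_ge hα n h2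
  calc f0 Qr ≤ t/(t+1) := hf
    _ = Qr * |er α (n+1)| := heq.symm
    _ ≤ Qr * psi α (Qr - 1) := by
        apply mul_le_mul_of_nonneg_left hpsi (by linarith)

lemma sqrt5_ge : (11/5:ℝ) ≤ Real.sqrt 5 := by
  rw [show (11:ℝ)/5 = Real.sqrt ((11/5)^2) from (Real.sqrt_sq (by norm_num)).symm]
  exact Real.sqrt_le_sqrt (by norm_num)

lemma sqrt5_le : Real.sqrt 5 ≤ (9/4:ℝ) := by
  rw [show (9:ℝ)/4 = Real.sqrt ((9/4)^2) from (Real.sqrt_sq (by norm_num)).symm]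
  exact Real.sqrt_le_sqrt (by norm_num)

lemma cfa_eq_golden (hα : Irrational α) (M : ℕ) (hM : ∀ m, M ≤ m → ⌊cfa α m⌋ = 1) :
    ∀ m, M ≤ m → cfa α m = (1+Real.sqrt 5)/2 := by
  set φ : ℝ := (1+Real.sqrt 5)/2 with hφdef
  have h5 : Real.sqrt 5 ^ 2 = 5 := Real.sq_sqrt (by norm_num)
  have hφ1 : (8/5:ℝ) ≤ φ := by
    rw [hφdef]; linarith [sqrt5_ge]
  have hφ2 : φ ≤ 2 := by
    rw [hφdef]; linarith [sqrt5_le]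
  have hφne : φ ≠ 0 := by linarith
  have hmul : φ * (φ - 1) = 1 := by rw [hφdef]; linear_combination h5/4
  have hinv : φ⁻¹ = φ - 1 := by
    field_simp
    linear_combination -hmul
  have hbnd : ∀ m, M ≤ m → 1 < cfa α m ∧ cfa α m < 2 := by
    intro m hm
    have hx : 1 < cfa α (m+1) := cfa_succ_gt_one hα m
    have hrec : cfa α m = (⌊cfa α m⌋ : ℝ) + (cfa α (m+1))⁻¹ := cfa_rec hα m
    rw [hM m hm] at hrec
    have hi1 : 0 < (cfa α (m+1))⁻¹ := inv_pos.mpr (by linarith)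
    have hi2 : (cfa α (m+1))⁻¹ < 1 := inv_lt_one_of_one_lt₀ hx
    constructor <;> (rw [hrec]; push_cast; linarith)
  have hcontr : ∀ m, M ≤ m → |cfa α m - φ| ≤ (5/8) * |cfa α (m+1) - φ| := by
    intro m hm
    have hx : 1 < cfa α (m+1) := cfa_succ_gt_one hα m
    have hxne : cfa α (m+1) ≠ 0 := by linarith
    have hrec : cfa α m = (⌊cfa α m⌋ : ℝ) + (cfa α (m+1))⁻¹ := cfa_rec hα m
    rw [hM m hm] at hrec
    have heq : cfa α m - φ = (φ - cfa α (m+1)) / (cfa α (m+1) * φ) := by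
      have heq1 : cfa α m - φ = (cfa α (m+1))⁻¹ - φ⁻¹ := by
        rw [hrec]; push_cast; rw [hinv]; ring
      rw [heq1]
      field_simp
    rw [heq, abs_div]
    have hden : (8/5:ℝ) ≤ |cfa α (m+1) * φ| := by
      rw [abs_of_pos (by nlinarith : (0:ℝ) < cfa α (m+1) * φ)]
      nlinarith
    have h1 : |φ - cfa α (m+1)| = |cfa α (m+1) - φ| := abs_sub_comm _ _
    rw [h1]
    rw [div_le_iff₀ (by linarith : (0:ℝ) < |cfa α (m+1) * φ|)]
    nlinarith [abs_nonneg (cfa α (m+1) - φ), hden]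
  have hiter : ∀ k, ∀ m, M ≤ m → |cfa α m - φ| ≤ (5/8)^k * 4 := by
    intro k
    induction k with
    | zero =>
      intro m hm
      obtain ⟨h1, h2⟩ := hbnd m hm
      rw [pow_zero, one_mul, abs_le]
      constructor <;> nlinarith
    | succ k ih =>
      intro m hm
      calc |cfa α m - φ| ≤ (5/8) * |cfa α (m+1) - φ| := hcontr m hm
        _ ≤ (5/8) * ((5/8)^k * 4) := by
            have := ih (m+1) (by omega)
            nlinarith
        _ = (5/8)^(k+1) * 4 := by ring
  intro m hm
  have hlim : Tendsto (fun k => ((5/8:ℝ))^k * 4) atTop (nhds 0) := by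
    have h := tendsto_pow_atTop_nhds_zero_of_lt_one (by norm_num : (0:ℝ) ≤ 5/8) (by norm_num : (5/8:ℝ) < 1)
    simpa using h.mul_const (4:ℝ)
  have hle : |cfa α m - φ| ≤ 0 :=
    ge_of_tendsto hlim (Filter.Eventually.of_forall (fun k => hiter k m hm))
  have := abs_nonneg (cfa α m - φ)
  have h0 : |cfa α m - φ| = 0 := le_antisymm hle this
  have := abs_eq_zero.mp h0
  linarith [this]

lemma condII (t Q : ℝ) (ht : 27/10 ≤ t) (hQ : 6 ≤ Q) :
    t^2/Q^2 ≤ (t - (3+Real.sqrt 5)/2)*(t+1) := by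
  have h5 : Real.sqrt 5 ≤ 9/4 := by
    rw [show (9:ℝ)/4 = Real.sqrt ((9/4)^2) from (Real.sqrt_sq (by norm_num)).symm]
    exact Real.sqrt_le_sqrt (by norm_num)
  have h1 : t^2/Q^2 ≤ t^2/36 := by
    apply div_le_div_of_nonneg_left (sq_nonneg t) (by norm_num)
    nlinarith
  refine le_trans h1 ?_
  nlinarith [sq_nonneg (t - 27/10), h5, ht]

lemma condI (qa Qa : ℝ) (hq : 1 ≤ qa) (hQ : 1 ≤ Qa)
    (hJ : qa^2 + Qa*qa + 1 ≤ Qa^2) :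
    ((1+Real.sqrt 5)/2 * Qa / qa)^2/Qa^2
      ≤ ((1+Real.sqrt 5)/2 * Qa / qa - (3+Real.sqrt 5)/2)*((1+Real.sqrt 5)/2 * Qa / qa + 1) := by
  set s := Real.sqrt 5 with hs
  have h5 : s^2 = 5 := Real.sq_sqrt (by norm_num)
  have h5pos : 0 ≤ s := Real.sqrt_nonneg _
  set t := (1+s)/2 * Qa / qa with htdef
  have hqne : qa ≠ 0 := by linarith
  have htq : t * qa = (1+s)/2 * Qa := by
    rw [htdef]; field_simp
  have e2 : t^2*qa^2 = (3+s)/2*Qa^2 := by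
    have e1 : (t*qa)^2 = ((1+s)/2*Qa)^2 := by rw [htq]
    linear_combination e1 + (Qa^2/4)*h5
  have e3 : (t-(3+s)/2)*(t+1)*qa^2 = (3+s)/2*(Qa^2 - Qa*qa - qa^2) := by
    linear_combination e2 + ((1-(3+s)/2)*qa)*htq + (-Qa*qa/4)*h5
  rw [div_le_iff₀ (by positivity : (0:ℝ) < Qa^2)]
  have e4 : ((t-(3+s)/2)*(t+1)*Qa^2 - t^2) * qa^2
      = (3+s)/2*Qa^2*(Qa^2 - Qa*qa - qa^2 - 1) := by
    linear_combination Qa^2 * e3 - e2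
  have e5 : 0 ≤ ((t-(3+s)/2)*(t+1)*Qa^2 - t^2) * qa^2 := by
    rw [e4]
    apply mul_nonneg (by positivity)
    linarith
  have hq2 : 0 < qa^2 := by positivity
  nlinarith [e5, hq2]

lemma Jne (hα : Irrational α) (ν : ℕ) :
    qd α (ν+2)^2 - qd α (ν+2)*qd α (ν+1) - qd α (ν+1)^2 ≠ 0 := by
  intro h
  have hq1 : 1 ≤ qd α (ν+1) := qd_pos hα ν
  have h5 : Irrational (Real.sqrt 5) := (Nat.Prime.irrational_sqrt (by norm_num))
  set a := qd α (ν+2) with ha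
  set b := qd α (ν+1) with hbb
  have hsq : ((|2*a - b| : ℤ):ℝ)^2 = (Real.sqrt 5 * (b:ℝ))^2 := by
    have h55 : Real.sqrt 5 ^ 2 = 5 := Real.sq_sqrt (by norm_num)
    have : ((|2*a - b| : ℤ):ℝ)^2 = ((2*a-b : ℤ):ℝ)^2 := by
      push_cast [sq_abs]
      ring
    rw [this]
    have hz : ((2*a-b : ℤ):ℝ)^2 = 5*((b:ℤ):ℝ)^2 := by
      have : (2*a-b)^2 = 5*b^2 := by nlinarith [h]
      exact_mod_cast congrArg (fun z : ℤ => (z:ℝ)) this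
    rw [hz, mul_pow, h55]
  have hbpos : (0:ℝ) < (b:ℝ) := by exact_mod_cast hq1
  have habs : ((|2*a - b| : ℤ):ℝ) = Real.sqrt 5 * (b:ℝ) := by
    have h1 : (0:ℝ) ≤ ((|2*a - b| : ℤ):ℝ) := by positivity
    have h2 : (0:ℝ) ≤ Real.sqrt 5 * (b:ℝ) := by positivity
    nlinarith [hsq]
  apply h5
  refine ⟨((|2*a-b| : ℤ) : ℚ) / ((b:ℤ):ℚ), ?_⟩
  have hbne : ((b:ℤ):ℝ) ≠ 0 := ne_of_gt hbpos
  have hcast : ((((|2*a-b| : ℤ) : ℚ) / ((b:ℤ):ℚ) : ℚ) : ℝ)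
      = ((|2*a-b| : ℤ):ℝ) / ((b:ℤ):ℝ) := by push_cast; ring
  rw [hcast, habs]
  field_simp

lemma main_ex (hα : Irrational α) (N : ℕ) :
    ∃ Q : ℕ, N ≤ Q ∧ 2 ≤ Q ∧ f0 (Q:ℝ) ≤ (Q:ℝ) * psi α ((Q:ℝ) - 1) := by
  have conv : ∀ n : ℕ, (N:ℤ) ≤ qd α (n+2) → 2 ≤ qd α (n+2) →
      f0 ((qd α (n+2):ℝ)) ≤ (qd α (n+2):ℝ) * psi α ((qd α (n+2):ℝ) - 1) →
      ∃ Q : ℕ, N ≤ Q ∧ 2 ≤ Q ∧ f0 (Q:ℝ) ≤ (Q:ℝ) * psi α ((Q:ℝ) - 1) := by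
    intro n h1 h2 h3
    refine ⟨(qd α (n+2)).toNat, by omega, by omega, ?_⟩
    have hcast : (((qd α (n+2)).toNat : ℕ) : ℝ) = ((qd α (n+2) : ℤ) : ℝ) := by
      exact_mod_cast congrArg (fun z : ℤ => (z:ℝ)) (Int.toNat_of_nonneg (by omega))
    rw [hcast]
    exact h3
  by_cases hall : ∃ M, ∀ m, M ≤ m → ⌊cfa α m⌋ = 1
  · obtain ⟨M, hM⟩ := hall
    have hgold : ∀ m, M ≤ m → cfa α m = (1+Real.sqrt 5)/2 := cfa_eq_golden hα M hM
    set m₀ := max M N + 1 with hm0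
    obtain ⟨j, hj⟩ : ∃ j, qd α (m₀+2)^2 - qd α (m₀+2)*qd α (m₀+1) - qd α (m₀+1)^2 = j :=
      ⟨_, rfl⟩
    obtain ⟨j2, hj2⟩ : ∃ j2, qd α (m₀+3)^2 - qd α (m₀+3)*qd α (m₀+2) - qd α (m₀+2)^2 = j2 :=
      ⟨_, rfl⟩
    have hflip : j2 = -j := by
      have h1 : qd α (m₀+3) = ⌊cfa α (m₀+2)⌋ * qd α (m₀+2) + qd α (m₀+1) := rfl
      rw [hM (m₀+2) (by omega)] at h1
      rw [← hj, ← hj2, h1]; ring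
    have hne : j ≠ 0 := by rw [← hj]; exact Jne hα m₀
    have hq1 : 1 ≤ qd α (m₀+1) := qd_pos hα m₀
    have hge1 : (m₀:ℤ) + 1 ≤ qd α (m₀+2) := qd_ge hα m₀
    have hge2 : (m₀:ℤ) + 2 ≤ qd α (m₀+3) := by
      have := qd_ge hα (m₀+1)
      push_cast at this ⊢
      linarith
    have hNm : N ≤ m₀ := by omega
    rcases le_or_gt 1 j with hJ | hJ
    · apply conv m₀ (by push_cast; omega) (by omega)
      apply key_lemma hα m₀ (by omega)
      rw [hgold (m₀+2) (by omega)]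
      apply condI
      · exact_mod_cast hq1
      · have : (1:ℤ) ≤ qd α (m₀+2) := by omega
        exact_mod_cast this
      · have : qd α (m₀+1)^2 + qd α (m₀+2)*qd α (m₀+1) + 1 ≤ qd α (m₀+2)^2 := by omega
        exact_mod_cast this
    · have hJ2 : 1 ≤ j2 := by omega
      have hq2 : 1 ≤ qd α (m₀+2) := by omega
      apply conv (m₀+1) (by show (N:ℤ) ≤ qd α (m₀+3); push_cast at hge2 ⊢; omega)
        (by show (2:ℤ) ≤ qd α (m₀+3); omega)
      apply key_lemma hα (m₀+1) (by show (2:ℤ) ≤ qd α (m₀+3); omega)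
      rw [show m₀+1+2 = m₀+3 from rfl, show m₀+1+1 = m₀+2 from rfl]
      rw [hgold (m₀+3) (by omega)]
      apply condI
      · exact_mod_cast hq2
      · have : (1:ℤ) ≤ qd α (m₀+3) := by omega
        exact_mod_cast this
      · have : qd α (m₀+2)^2 + qd α (m₀+3)*qd α (m₀+2) + 1 ≤ qd α (m₀+3)^2 := by omega
        exact_mod_cast this
  · push_neg at hall
    obtain ⟨m, hm1, hm2⟩ := hall (max N 6 + 2)
    obtain ⟨k, rfl⟩ : ∃ k, m = k + 3 := ⟨m - 3, by omega⟩
    have hfl : 2 ≤ ⌊cfa α (k+3)⌋ := by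
      have h1 : 1 ≤ ⌊cfa α (k+3)⌋ := floor_cfa_pos hα (k+2)
      omega
    have hge2 : (k:ℤ) + 1 ≤ qd α (k+2) := qd_ge hα k
    have hge3 : (k:ℤ) + 2 ≤ qd α (k+3) := by
      have := qd_ge hα (k+1); push_cast at this ⊢; linarith
    have hge4 : (k:ℤ) + 3 ≤ qd α (k+4) := by
      have := qd_ge hα (k+2); push_cast at this ⊢; linarith
    have hkN : max N 6 ≤ k + 1 := by omega
    have hc3 : (2:ℝ) ≤ cfa α (k+3) := by
      have h1 : ((⌊cfa α (k+3)⌋:ℤ):ℝ) ≤ cfa α (k+3) := Int.floor_le _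
      have h2 : (2:ℝ) ≤ ((⌊cfa α (k+3)⌋:ℤ):ℝ) := by exact_mod_cast hfl
      linarith
    have hq2r : (1:ℝ) ≤ (qd α (k+2):ℝ) := by exact_mod_cast qd_pos hα (k+1)
    have hq3r : (1:ℝ) ≤ (qd α (k+3):ℝ) := by exact_mod_cast qd_pos hα (k+2)
    by_cases hb : 10 * qd α (k+2) ≤ 7 * qd α (k+3)
    · apply conv (k+1) (by show (N:ℤ) ≤ qd α (k+3); push_cast at hge3 ⊢; omega)
        (by show (2:ℤ) ≤ qd α (k+3); omega)
      apply key_lemma hα (k+1) (by show (2:ℤ) ≤ qd α (k+3); omega)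
      rw [show k+1+2 = k+3 from rfl, show k+1+1 = k+2 from rfl]
      apply condII
      · -- 27/10 ≤ cfa α (k+3) * qd α (k+3) / qd α (k+2)
        rw [le_div_iff₀ (by linarith : (0:ℝ) < (qd α (k+2):ℝ))]
        have hbr : 10 * (qd α (k+2):ℝ) ≤ 7 * (qd α (k+3):ℝ) := by exact_mod_cast hb
        nlinarith [hc3, hq3r, hbr]
      · -- 6 ≤ qd α (k+3)
        have : (6:ℤ) ≤ qd α (k+3) := by omega
        exact_mod_cast this
    · push_neg at hb
      apply conv (k+2) (by show (N:ℤ) ≤ qd α (k+4); push_cast at hge4 ⊢; omega)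
        (by show (2:ℤ) ≤ qd α (k+4); omega)
      apply key_lemma hα (k+2) (by show (2:ℤ) ≤ qd α (k+4); omega)
      rw [show k+2+2 = k+4 from rfl, show k+2+1 = k+3 from rfl]
      apply condII
      · rw [le_div_iff₀ (by linarith : (0:ℝ) < (qd α (k+3):ℝ))]
        have hbr : 7 * (qd α (k+3):ℝ) < 10 * (qd α (k+2):ℝ) := by exact_mod_cast hb
        have hc4 : (1:ℝ) ≤ cfa α (k+4) := le_of_lt (cfa_succ_gt_one hα (k+3))
        have hQ4 : 2 * qd α (k+3) + qd α (k+2) ≤ qd α (k+4) := by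
          have h1 : qd α (k+4) = ⌊cfa α (k+3)⌋ * qd α (k+3) + qd α (k+2) := rfl
          have h2 : 1 ≤ qd α (k+3) := qd_pos hα (k+2)
          nlinarith [hfl]
        have hQ4r : 2 * (qd α (k+3):ℝ) + (qd α (k+2):ℝ) ≤ (qd α (k+4):ℝ) := by
          exact_mod_cast hQ4
        have hQ4pos : (0:ℝ) ≤ (qd α (k+4):ℝ) := by linarith
        nlinarith [hc4, hQ4r, hbr, hq3r]
      · have : (6:ℤ) ≤ qd α (k+4) := by omega
        exact_mod_cast this

/-- Theorem 1, part 1. For irrational `α` there is a strictly increasing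
sequence of integers `Q n ≥ 2` with `Q n · ψ_α(Q n − 1) ≥ f₀(Q n)` for every `n`. -/
theorem dirichlet_discrete_stmt0 (α : ℝ) (hα : Irrational α) :
    ∃ Q : ℕ → ℕ, StrictMono Q ∧ (∀ n, 2 ≤ Q n) ∧
      ∀ n, f0 (Q n) ≤ (Q n : ℝ) * psi α ((Q n : ℝ) - 1) := by
  choose g hg1 hg2 hg3 using main_ex hα
  let Q : ℕ → ℕ := fun n => Nat.rec (g 0) (fun _ prev => g (prev + 1)) n
  have hQsucc : ∀ n, Q (n+1) = g (Q n + 1) := fun n => rfl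
  have hmono : StrictMono Q := by
    apply strictMono_nat_of_lt_succ
    intro n
    have := hg1 (Q n + 1)
    rw [hQsucc]
    omega
  have hform : ∀ n, ∃ m, Q n = g m := by
    intro n
    cases n with
    | zero => exact ⟨0, rfl⟩
    | succ p => exact ⟨Q p + 1, rfl⟩
  refine ⟨Q, hmono, ?_, ?_⟩
  · intro n
    obtain ⟨m, hm⟩ := hform n
    rw [hm]
    exact hg2 m
  · intro n
    obtain ⟨m, hm⟩ := hform n
    rw [hm]
    exact hg3 m
end

section
/- Let k ≥ 1 and let α = 1/α_k = [0; \overline{1_{2k−1}, 2}]. Then (a) t·ψ_α(t) < g_k(t) for all sufficiently large real t ≥ 1, and (b) there exists a strictly increasing sequence (Q_n) of integers Q_n ≥ 2 with lim_{n→∞} Q_n·ψ_α(Q_n − 1)/g_k(Q_n) = 1. -/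
open Filter Real

namespace Stmt6

/-- Evaluation of a finite word of partial quotients with a real seed. -/
noncomputable def valR : List ℤ → ℝ → ℝ
  | [], x => x
  | a :: l, x => (a : ℝ) + 1 / valR l x

@[simp] lemma valR_nil (x : ℝ) : valR [] x = x := rfl

@[simp] lemma valR_cons (a : ℤ) (l : List ℤ) (x : ℝ) :
    valR (a :: l) x = (a : ℝ) + 1 / valR l x := rfl

lemma valR_bounds {l : List ℤ} (hl : ∀ a ∈ l, 1 ≤ a ∧ a ≤ 2) {x : ℝ}
    (hx1 : 1 ≤ x) (hx3 : x ≤ 3) : 1 ≤ valR l x ∧ valR l x ≤ 3 := by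
  induction l with
  | nil => exact ⟨hx1, hx3⟩
  | cons a l ih =>
    obtain ⟨h1, h3⟩ := ih (fun b hb => hl b (List.mem_cons_of_mem _ hb))
    obtain ⟨ha1, ha2⟩ := hl a (List.mem_cons_self)
    have ha1' : (1:ℝ) ≤ (a:ℝ) := by exact_mod_cast ha1
    have ha2' : (a:ℝ) ≤ 2 := by exact_mod_cast ha2
    have hpos : (0:ℝ) < valR l x := by linarith
    have hinv1 : 1 / valR l x ≤ 1 := by rw [div_le_one hpos]; linarith
    have hinv0 : 0 < 1 / valR l x := by positivity
    exact ⟨by rw [valR_cons]; linarith, by rw [valR_cons]; linarith⟩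

lemma valR_lower {l : List ℤ} (hne : l ≠ []) (hl : ∀ a ∈ l, 1 ≤ a ∧ a ≤ 2) {x : ℝ}
    (hx1 : 1 ≤ x) (hx3 : x ≤ 3) : 4/3 ≤ valR l x := by
  match l with
  | a :: l =>
    obtain ⟨h1, h3⟩ := valR_bounds (fun b hb => hl b (List.mem_cons_of_mem _ hb)) hx1 hx3
    obtain ⟨ha1, _⟩ := hl a (List.mem_cons_self)
    have ha1' : (1:ℝ) ≤ (a:ℝ) := by exact_mod_cast ha1
    have hpos : (0:ℝ) < valR l x := by linarith
    have : 1/3 ≤ 1 / valR l x := by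
      rw [le_div_iff₀ hpos]; linarith
    rw [valR_cons]; linarith

lemma valR_continuousAt {l : List ℤ} (hl : ∀ a ∈ l, 1 ≤ a ∧ a ≤ 2) {x : ℝ}
    (hx1 : 1 ≤ x) (hx3 : x ≤ 3) : ContinuousAt (valR l) x := by
  induction l with
  | nil => exact continuousAt_id
  | cons a l ih =>
    have hsub : ∀ b ∈ l, 1 ≤ b ∧ b ≤ 2 := fun b hb => hl b (List.mem_cons_of_mem _ hb)
    have h1 := (valR_bounds hsub hx1 hx3).1
    have hne : valR l x ≠ 0 := by linarith
    have : ContinuousAt (fun y => (a : ℝ) + 1 / valR l y) x :=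
      continuousAt_const.add (continuousAt_const.div (ih hsub) hne)
    exact this

lemma cfVal_cons_cons (a b : ℤ) (l : List ℤ) :
    cfVal (a :: b :: l) = (a : ℝ) + 1 / cfVal (b :: l) := rfl

lemma cfVal_append (w l : List ℤ) (hl : l ≠ []) :
    cfVal (w ++ l) = valR w (cfVal l) := by
  induction w with
  | nil => simp
  | cons a w ih =>
    match hwl : w ++ l with
    | [] => exact absurd (List.append_eq_nil_iff.mp hwl).2 hl
    | b :: l' =>
      rw [List.cons_append, hwl, cfVal_cons_cons, valR_cons, ← ih, hwl]

lemma cfVal_bounds {l : List ℤ} (hne : l ≠ []) (hl : ∀ a ∈ l, 1 ≤ a ∧ a ≤ 2) :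
    1 ≤ cfVal l ∧ cfVal l ≤ 3 := by
  induction l with
  | nil => exact absurd rfl hne
  | cons a l ih =>
    obtain ⟨ha1, ha2⟩ := hl a (List.mem_cons_self)
    have ha1' : (1:ℝ) ≤ (a:ℝ) := by exact_mod_cast ha1
    have ha2' : (a:ℝ) ≤ 2 := by exact_mod_cast ha2
    match l with
    | [] => exact ⟨by simpa [cfVal] using ha1', by simp [cfVal]; linarith⟩
    | b :: l' =>
      obtain ⟨h1, h3⟩ := ih (by simp) (fun c hc => hl c (List.mem_cons_of_mem _ hc))
      have hpos : (0:ℝ) < cfVal (b :: l') := by linarith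
      have hinv1 : 1 / cfVal (b :: l') ≤ 1 := by rw [div_le_one hpos]; linarith
      have hinv0 : 0 < 1 / cfVal (b :: l') := by positivity
      rw [cfVal_cons_cons]
      exact ⟨by linarith, by linarith⟩

end Stmt6
namespace Stmt6

/-- The period word `1^{2k-1} 2`. -/
def W2k (k : ℕ) : List ℤ := List.replicate (2*k - 1) 1 ++ [2]

lemma W2k_mem {k : ℕ} : ∀ a ∈ W2k k, 1 ≤ a ∧ a ≤ 2 := by
  intro a ha
  rcases List.mem_append.mp ha with h | h
  · rw [List.eq_of_mem_replicate h]; exact ⟨le_refl _, by norm_num⟩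
  · simp at h; rw [h]; exact ⟨by norm_num, le_refl _⟩

lemma repl_append_mem {s : ℕ} : ∀ a ∈ List.replicate s (1:ℤ) ++ [2], 1 ≤ a ∧ a ≤ 2 := by
  intro a ha
  rcases List.mem_append.mp ha with h | h
  · rw [List.eq_of_mem_replicate h]; exact ⟨le_refl _, by norm_num⟩
  · simp at h; rw [h]; exact ⟨by norm_num, le_refl _⟩

lemma aSeq_mem {k : ℕ} (n : ℕ) : 1 ≤ aSeq k n ∧ aSeq k n ≤ 2 := by
  unfold aSeq; split <;> norm_num

lemma cfList_ne_nil {a : ℕ → ℤ} {n : ℕ} : cfList a n ≠ [] := by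
  simp [cfList, List.range_succ]

lemma cfList_mem {k : ℕ} {n : ℕ} : ∀ a ∈ cfList (aSeq k) n, 1 ≤ a ∧ a ≤ 2 := by
  intro a ha
  simp only [cfList, List.mem_map] at ha
  obtain ⟨i, _, rfl⟩ := ha
  exact aSeq_mem i

lemma W2k_length {k : ℕ} (hk : 1 ≤ k) : (W2k k).length = 2*k := by
  simp [W2k]; omega

lemma range_map_eq_W2k {k : ℕ} (hk : 1 ≤ k) : (List.range (2*k)).map (aSeq k) = W2k k := by
  apply List.ext_getElem
  · simp [W2k]; omega
  · intro i h1 h2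
    simp only [List.length_map, List.length_range] at h1
    rw [List.getElem_map, List.getElem_range]
    simp only [W2k]
    rcases lt_or_ge i (2*k - 1) with h | h
    · rw [List.getElem_append_left (as := List.replicate (2*k-1) (1:ℤ)) (by simpa using h)]
      simp only [List.getElem_replicate]
      unfold aSeq
      rw [if_neg (by rw [Nat.mod_eq_of_lt (by omega)]; omega)]
    · have hi : i = 2*k - 1 := by omega
      subst hi
      rw [List.getElem_append_right (as := List.replicate (2*k-1) (1:ℤ)) (by simp only [List.length_replicate]; exact le_refl _)]
      simp only [List.length_replicate]
      unfold aSeq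
      rw [if_pos (by rw [show 2*k-1+1 = 2*k from by omega]; exact Nat.mod_self _)]
      simp

lemma cfList_eq_W2k {k : ℕ} (hk : 1 ≤ k) : cfList (aSeq k) (2*k - 1) = W2k k := by
  rw [← range_map_eq_W2k hk]
  unfold cfList
  rw [show 2*k - 1 + 1 = 2*k from by omega]

lemma cfList_add {k : ℕ} (hk : 1 ≤ k) (m : ℕ) :
    cfList (aSeq k) (2*k + m) = W2k k ++ cfList (aSeq k) m := by
  unfold cfList
  have : 2*k + m + 1 = 2*k + (m+1) := by omega
  rw [this, List.range_add, List.map_append, ← range_map_eq_W2k hk, List.map_map]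
  congr 1
  apply List.map_congr_left
  intro i _
  show aSeq k (2*k + i) = aSeq k i
  unfold aSeq
  rw [show 2*k + i + 1 = (i+1) + 2*k from by omega, Nat.add_mod_right]

section Main
variable {k : ℕ} {αk : ℝ}

lemma alphak_mem (hk : 1 ≤ k) (h : IsCFExp (aSeq k) αk) : 1 ≤ αk ∧ αk ≤ 3 := by
  constructor
  · exact ge_of_tendsto h (Filter.Eventually.of_forall fun n =>
      (cfVal_bounds cfList_ne_nil cfList_mem).1)
  · exact le_of_tendsto h (Filter.Eventually.of_forall fun n =>
      (cfVal_bounds cfList_ne_nil cfList_mem).2)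

lemma alphak_fixed (hk : 1 ≤ k) (h : IsCFExp (aSeq k) αk) : valR (W2k k) αk = αk := by
  obtain ⟨h1, h3⟩ := alphak_mem hk h
  have hshift : Filter.Tendsto (fun m => cfVal (cfList (aSeq k) (2*k + m)))
      Filter.atTop (nhds αk) := by
    have := h.comp (Filter.tendsto_add_atTop_nat (2*k))
    simpa [Function.comp_def, Nat.add_comm] using this
  have heq : ∀ m, cfVal (cfList (aSeq k) (2*k + m)) = valR (W2k k) (cfVal (cfList (aSeq k) m)) := by
    intro m
    rw [cfList_add hk, cfVal_append _ _ cfList_ne_nil]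
  have hcont : ContinuousAt (valR (W2k k)) αk := valR_continuousAt W2k_mem h1 h3
  have : Filter.Tendsto (fun m => valR (W2k k) (cfVal (cfList (aSeq k) m)))
      Filter.atTop (nhds (valR (W2k k) αk)) := hcont.tendsto.comp h
  rw [Filter.tendsto_congr heq] at hshift
  exact tendsto_nhds_unique this hshift

end Main
end Stmt6
namespace Stmt6

/-- The complete quotient ("tail value") of `1/αk`'s expansion at position `m ≥ 1`,
depending only on `m % 2k`. -/
noncomputable def Tm (k : ℕ) (αk : ℝ) (m : ℕ) : ℝ :=
  valR (List.replicate (2*k - 1 - (m - 1) % (2*k)) 1 ++ [2]) αk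

section Main
variable {k : ℕ} {αk : ℝ}

lemma Tm_bounds (hk : 1 ≤ k) (h : IsCFExp (aSeq k) αk) (m : ℕ) :
    4/3 ≤ Tm k αk m ∧ Tm k αk m ≤ 3 := by
  obtain ⟨h1, h3⟩ := alphak_mem hk h
  exact ⟨valR_lower (by simp) repl_append_mem h1 h3,
    (valR_bounds repl_append_mem h1 h3).2⟩

lemma Tm_pos (hk : 1 ≤ k) (h : IsCFExp (aSeq k) αk) (m : ℕ) : 0 < Tm k αk m :=
  lt_of_lt_of_le (by norm_num) (Tm_bounds hk h m).1

lemma Tm_one (hk : 1 ≤ k) (h : IsCFExp (aSeq k) αk) : Tm k αk 1 = αk := by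
  have : Tm k αk 1 = valR (W2k k) αk := by
    unfold Tm W2k; norm_num
  rw [this, alphak_fixed hk h]

lemma Tm_periodic (hk : 1 ≤ k) (m : ℕ) (hm : 1 ≤ m) :
    Tm k αk (m + 2*k) = Tm k αk m := by
  unfold Tm
  rw [show m + 2*k - 1 = (m-1) + 2*k from by omega, Nat.add_mod_right]

lemma invSeq_crit {m : ℕ} (hm : 1 ≤ m) (h0 : m % (2*k) = 0) : invSeq k m = 2 := by
  unfold invSeq; rw [if_neg (by omega), if_pos h0]

lemma invSeq_noncrit {m : ℕ} (hm : 1 ≤ m) (h0 : m % (2*k) ≠ 0) : invSeq k m = 1 := by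
  unfold invSeq; rw [if_neg (by omega), if_neg h0]

lemma Tm_rec (hk : 1 ≤ k) (h : IsCFExp (aSeq k) αk) (m : ℕ) (hm : 1 ≤ m) :
    Tm k αk m = (invSeq k m : ℝ) + 1 / Tm k αk (m+1) := by
  have h2k : 0 < 2*k := by omega
  set r := (m-1) % (2*k) with hr_def
  have hr : r < 2*k := Nat.mod_lt _ h2k
  have hm' : m % (2*k) = (r + 1) % (2*k) := by
    conv_lhs => rw [show m = (m-1)+1 from by omega]
    rw [Nat.add_mod (m-1) 1, Nat.mod_eq_of_lt (show 1 < 2*k from by omega), ← hr_def]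
  by_cases hcase : r = 2*k - 1
  · have hm0 : m % (2*k) = 0 := by
      rw [hm', hcase, show 2*k-1+1 = 2*k from by omega, Nat.mod_self]
    have ha : invSeq k m = 2 := invSeq_crit hm hm0
    have hTm : Tm k αk m = valR [2] αk := by
      unfold Tm; rw [← hr_def, hcase, show 2*k-1-(2*k-1) = 0 from by omega]
      simp
    have hTm1 : Tm k αk (m+1) = αk := by
      have : Tm k αk (m+1) = valR (W2k k) αk := by
        unfold Tm W2k
        rw [show m+1-1 = m from by omega, hm0]
        norm_num
      rw [this, alphak_fixed hk h]
    rw [hTm, hTm1, ha]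
    simp [valR]
  · have hr2 : r ≤ 2*k - 2 := by omega
    have hm1 : m % (2*k) = r + 1 := by rw [hm', Nat.mod_eq_of_lt (by omega)]
    have ha : invSeq k m = 1 := invSeq_noncrit hm (by omega)
    have hTm1 : Tm k αk (m+1) = valR (List.replicate (2*k - 2 - r) 1 ++ [2]) αk := by
      unfold Tm
      rw [show m+1-1 = m from by omega, hm1, show 2*k-1-(r+1) = 2*k-2-r from by omega]
    have hTm : Tm k αk m = valR ((1:ℤ) :: (List.replicate (2*k - 2 - r) 1 ++ [2])) αk := by
      unfold Tm
      rw [← hr_def, show 2*k-1-r = (2*k-2-r)+1 from by omega, List.replicate_succ,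
        List.cons_append]
    rw [hTm, hTm1, valR_cons, ha]
    try norm_num

end Main
end Stmt6
namespace Stmt6

/-- Denominators (shifted): `Qd (n+1) = q_n`, `Qd 0 = q_{-1} = 0`. -/
def Qd (k : ℕ) : ℕ → ℤ
  | 0 => 0
  | 1 => 1
  | (n+2) => invSeq k (n+1) * Qd k (n+1) + Qd k n

/-- Numerators (shifted): `Pd (n+1) = p_n`, `Pd 0 = p_{-1} = 1`. -/
def Pd (k : ℕ) : ℕ → ℤ
  | 0 => 1
  | 1 => 0
  | (n+2) => invSeq k (n+1) * Pd k (n+1) + Pd k n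

lemma Qd_succ (k n : ℕ) : Qd k (n+2) = invSeq k (n+1) * Qd k (n+1) + Qd k n := rfl
lemma Pd_succ (k n : ℕ) : Pd k (n+2) = invSeq k (n+1) * Pd k (n+1) + Pd k n := rfl

lemma invSeq_bounds {k : ℕ} {m : ℕ} (hm : 1 ≤ m) : 1 ≤ invSeq k m ∧ invSeq k m ≤ 2 := by
  unfold invSeq; rw [if_neg (by omega)]; split <;> norm_num

lemma Qd_pos (k : ℕ) : ∀ n, 1 ≤ Qd k (n+1) ∧ 0 ≤ Qd k n := by
  intro n
  induction n with
  | zero => exact ⟨le_refl _, le_refl _⟩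
  | succ n ih =>
    have ha := invSeq_bounds (k := k) (m := n+1) (by omega)
    constructor
    · rw [Qd_succ]; nlinarith [ih.1, ih.2, ha.1]
    · exact le_trans zero_le_one ih.1

lemma Qd_strict (k : ℕ) {n : ℕ} (hn : 1 ≤ n) : Qd k (n+1) < Qd k (n+2) := by
  have ha := invSeq_bounds (k := k) (m := n+1) (by omega)
  have h1 := Qd_pos k n
  have h2 := (Qd_pos k (n-1)).1
  have : Qd k ((n-1)+1) = Qd k n := by congr 1; omega
  rw [Qd_succ]
  nlinarith [h1.1]

lemma Qd_mono (k : ℕ) (n : ℕ) : Qd k (n+1) ≤ Qd k (n+2) := by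
  have ha := invSeq_bounds (k := k) (m := n+1) (by omega)
  have h1 := Qd_pos k n
  rw [Qd_succ]
  nlinarith [h1.1]

lemma Qd_mono_of_le (k : ℕ) {i j : ℕ} (hij : i ≤ j) : Qd k (i+1) ≤ Qd k (j+1) := by
  induction j with
  | zero => have : i = 0 := by omega
            rw [this]
  | succ j ih =>
    rcases Nat.lt_or_ge i (j+1) with h | h
    · exact le_trans (ih (by omega)) (Qd_mono k j)
    · have : i = j+1 := by omega
      rw [this]

lemma Qd_strict_of_lt (k : ℕ) {i j : ℕ} (hi : 1 ≤ i) (hij : i < j) :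
    Qd k (i+1) < Qd k (j+1) := by
  have h1 : Qd k (i+2) ≤ Qd k (j+1) := by
    have := Qd_mono_of_le k (show i+1 ≤ j from hij)
    exact this
  exact lt_of_lt_of_le (Qd_strict k hi) h1

lemma Qd_ge (k : ℕ) : ∀ n : ℕ, (n : ℤ) ≤ Qd k (n+1) := by
  intro n
  induction n with
  | zero => simp [Qd]
  | succ n ih =>
    have ha := invSeq_bounds (k := k) (m := n+1) (by omega)
    have h1 := Qd_pos k n
    rcases Nat.eq_zero_or_pos n with h | h
    · subst h; rw [Qd_succ]; push_cast; nlinarith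
    · have h2 : 1 ≤ Qd k n := by
        have := (Qd_pos k (n-1)).1
        have heq : Qd k ((n-1)+1) = Qd k n := by congr 1; omega
        rwa [heq] at this
      rw [Qd_succ]; push_cast; nlinarith [h1.1]

lemma det (k : ℕ) : ∀ n, Pd k n * Qd k (n+1) - Pd k (n+1) * Qd k n = (-1)^n := by
  intro n
  induction n with
  | zero => simp [Pd, Qd]
  | succ n ih => rw [Qd_succ, Pd_succ, pow_succ]; ring_nf; ring_nf at ih; linarith

section Main
variable {k : ℕ} {αk : ℝ}

lemma alphak_ne (hk : 1 ≤ k) (h : IsCFExp (aSeq k) αk) : αk ≠ 0 := by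
  have := (alphak_mem hk h).1; linarith

lemma star (hk : 1 ≤ k) (h : IsCFExp (aSeq k) αk) : ∀ n,
    Tm k αk (n+1) * (Qd k (n+1) : ℝ) + (Qd k n : ℝ)
      = αk * (Tm k αk (n+1) * (Pd k (n+1) : ℝ) + (Pd k n : ℝ)) := by
  intro n
  induction n with
  | zero =>
    show Tm k αk 1 * ((1:ℤ) : ℝ) + ((0:ℤ) : ℝ) = αk * (Tm k αk 1 * ((0:ℤ):ℝ) + ((1:ℤ):ℝ))
    rw [Tm_one hk h]
    push_cast
    ring
  | succ n ih =>
    have trec := Tm_rec hk h (n+1) (by omega)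
    have ht2 : Tm k αk (n+2) ≠ 0 := ne_of_gt (Tm_pos hk h (n+2))
    have ht : Tm k αk (n+1) * Tm k αk (n+2) = (invSeq k (n+1) : ℝ) * Tm k αk (n+2) + 1 := by
      rw [trec]; field_simp
    rw [Qd_succ, Pd_succ]
    push_cast
    linear_combination (Tm k αk (n+2)) * ih +
      (αk * (Pd k (n+1) : ℝ) - (Qd k (n+1) : ℝ)) * ht

/-- `ξ_n = |q_n α - p_n| = 1/(T_{n+1} q_n + q_{n-1})`. -/
noncomputable def xiR (k : ℕ) (αk : ℝ) (n : ℕ) : ℝ :=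
  (Tm k αk (n+1) * (Qd k (n+1) : ℝ) + (Qd k n : ℝ))⁻¹

lemma denom_pos (hk : 1 ≤ k) (h : IsCFExp (aSeq k) αk) (n : ℕ) :
    0 < Tm k αk (n+1) * (Qd k (n+1) : ℝ) + (Qd k n : ℝ) := by
  have hT := (Tm_bounds hk h (n+1)).1
  have h1 : (1:ℝ) ≤ (Qd k (n+1) : ℝ) := by exact_mod_cast (Qd_pos k n).1
  have h0 : (0:ℝ) ≤ (Qd k n : ℝ) := by exact_mod_cast (Qd_pos k n).2
  nlinarith

lemma xiR_pos (hk : 1 ≤ k) (h : IsCFExp (aSeq k) αk) (n : ℕ) : 0 < xiR k αk n :=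
  inv_pos.mpr (denom_pos hk h n)

lemma xiR_mul (hk : 1 ≤ k) (h : IsCFExp (aSeq k) αk) (n : ℕ) :
    xiR k αk n * (Tm k αk (n+1) * (Qd k (n+1) : ℝ) + (Qd k n : ℝ)) = 1 :=
  inv_mul_cancel₀ (ne_of_gt (denom_pos hk h n))

lemma E_eq (hk : 1 ≤ k) (h : IsCFExp (aSeq k) αk) (n : ℕ) :
    αk⁻¹ * (Qd k (n+1) : ℝ) - (Pd k (n+1) : ℝ) = (-1)^n * xiR k αk n := by
  have hs := star hk h n
  have hdet : ((Pd k n : ℝ) * (Qd k (n+1) : ℝ) - (Pd k (n+1) : ℝ) * (Qd k n : ℝ)) = (-1)^n := by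
    have h0 := det k n
    have h1 : ((Pd k n * Qd k (n+1) - Pd k (n+1) * Qd k n : ℤ) : ℝ) = (((-1)^n : ℤ) : ℝ) := by
      exact_mod_cast congrArg (fun z : ℤ => (z : ℝ)) h0
    push_cast at h1
    linarith
  have hd := denom_pos hk h n
  have hinv : αk⁻¹ * αk = 1 := inv_mul_cancel₀ (alphak_ne hk h)
  have key : (αk⁻¹ * (Qd k (n+1) : ℝ) - (Pd k (n+1) : ℝ))
      * (Tm k αk (n+1) * (Qd k (n+1) : ℝ) + (Qd k n : ℝ)) = (-1)^n := by
    linear_combination (αk⁻¹ * (Qd k (n+1) : ℝ)) * hs + hdet +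
      ((Qd k (n+1) : ℝ) * (Tm k αk (n+1) * (Pd k (n+1) : ℝ) + (Pd k n : ℝ))) * hinv
  rw [xiR]
  rw [eq_mul_inv_iff_mul_eq₀ (ne_of_gt hd)]
  linear_combination key

lemma xiR_lt_half (hk : 1 ≤ k) (h : IsCFExp (aSeq k) αk) {n : ℕ} (hn : 1 ≤ n) :
    xiR k αk n < 1/2 := by
  have hT := (Tm_bounds hk h (n+1)).1
  have h1 : (1:ℝ) ≤ (Qd k (n+1) : ℝ) := by exact_mod_cast (Qd_pos k n).1
  have h0 : (1:ℝ) ≤ (Qd k n : ℝ) := by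
    have := (Qd_pos k (n-1)).1
    have heq : Qd k ((n-1)+1) = Qd k n := by congr 1; omega
    rw [heq] at this
    exact_mod_cast this
  have hd : (7:ℝ)/3 ≤ Tm k αk (n+1) * (Qd k (n+1) : ℝ) + (Qd k n : ℝ) := by nlinarith
  have := denom_pos hk h n
  rw [xiR, show (1:ℝ)/2 = (2:ℝ)⁻¹ from by norm_num]
  exact inv_strictAnti₀ (by norm_num) (by linarith)

lemma xiR_le (hk : 1 ≤ k) (h : IsCFExp (aSeq k) αk) {n : ℕ} (hn : 1 ≤ n) :
    xiR k αk n ≤ 1/(n:ℝ) := by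
  have hT := (Tm_bounds hk h (n+1)).1
  have h1 : ((n:ℝ)) ≤ (Qd k (n+1) : ℝ) := by exact_mod_cast Qd_ge k n
  have h0 : (0:ℝ) ≤ (Qd k n : ℝ) := by exact_mod_cast (Qd_pos k n).2
  have hn' : (1:ℝ) ≤ (n:ℝ) := by exact_mod_cast hn
  have hd : (n:ℝ) ≤ Tm k αk (n+1) * (Qd k (n+1) : ℝ) + (Qd k n : ℝ) := by nlinarith
  rw [xiR, one_div]
  exact inv_anti₀ (by linarith) hd

end Main
end Stmt6
namespace Stmt6

lemma round_eq_of_abs {x : ℝ} {p : ℤ} (h : |x - p| < 1/2) : round x = p := by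
  rw [abs_lt] at h
  rw [round_eq]
  apply Int.floor_eq_iff.mpr
  constructor
  · push_cast; linarith [h.1]
  · push_cast; linarith [h.2]

lemma intDist_le (x : ℝ) (p : ℤ) : intDist x ≤ |x - p| := by
  unfold intDist
  by_cases hp : p = round x
  · rw [hp]
  · have h1 : |x - round x| ≤ 1/2 := abs_sub_round x
    have h2 : (1:ℝ) ≤ |(p:ℝ) - (round x : ℝ)| := by
      have hne : p - round x ≠ 0 := sub_ne_zero.mpr hp
      have := Int.one_le_abs hne
      have : ((1:ℤ):ℝ) ≤ ((|p - round x| : ℤ) : ℝ) := by exact_mod_cast this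
      rw [Int.cast_abs] at this
      push_cast at this
      linarith
    have h3 : |(p:ℝ) - (round x:ℝ)| ≤ |x - p| + |x - round x| := by
      have := abs_sub_abs_le_abs_sub ((p:ℝ) - x) ((round x : ℝ) - x)
      calc |(p:ℝ) - (round x:ℝ)| = |((p:ℝ) - x) - ((round x:ℝ) - x)| := by ring_nf
        _ ≤ |(p:ℝ) - x| + |(round x:ℝ) - x| := abs_sub _ _
        _ = |x - p| + |x - round x| := by rw [abs_sub_comm ((p:ℝ)) x, abs_sub_comm ((round x:ℝ)) x]
    linarith

section Main
variable {k : ℕ} {αk : ℝ}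

lemma best_approx (hk : 1 ≤ k) (h : IsCFExp (aSeq k) αk) (n : ℕ) (q p : ℤ)
    (hq1 : 1 ≤ q) (hq : q < Qd k (n+2)) :
    xiR k αk n ≤ |(q:ℝ) * αk⁻¹ - p| := by
  set x : ℤ := (-1)^n * (q * Pd k (n+2) - p * Qd k (n+2)) with hx
  set y : ℤ := (-1)^n * (p * Qd k (n+1) - q * Pd k (n+1)) with hy
  have hdet : Pd k (n+1) * Qd k (n+2) - Pd k (n+2) * Qd k (n+1) = (-1)^(n+1) := det k (n+1)
  have hsq : ((-1:ℤ)^n) * ((-1:ℤ)^n) = 1 := by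
    rw [← pow_add, ← two_mul, pow_mul]; norm_num
  have hq_eq : x * Qd k (n+1) + y * Qd k (n+2) = q := by
    rw [hx, hy]; linear_combination (-((-1:ℤ)^n) * q) * hdet + q * hsq
  have hp_eq : x * Pd k (n+1) + y * Pd k (n+2) = p := by
    rw [hx, hy]; linear_combination (-((-1:ℤ)^n) * p) * hdet + p * hsq
  have he1 := E_eq hk h n
  have he2 : αk⁻¹ * (Qd k (n+2) : ℝ) - (Pd k (n+2) : ℝ) = (-1)^(n+1) * xiR k αk (n+1) :=
    E_eq hk h (n+1)
  have hc1 : ((x : ℝ)) * (Qd k (n+1) : ℝ) + (y:ℝ) * (Qd k (n+2) : ℝ) = (q:ℝ) := by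
    exact_mod_cast congrArg (fun z : ℤ => (z:ℝ)) hq_eq
  have hc2 : ((x : ℝ)) * (Pd k (n+1) : ℝ) + (y:ℝ) * (Pd k (n+2) : ℝ) = (p:ℝ) := by
    exact_mod_cast congrArg (fun z : ℤ => (z:ℝ)) hp_eq
  have hkey : (q:ℝ) * αk⁻¹ - p = (x:ℝ) * ((-1)^n * xiR k αk n)
      + (y:ℝ) * ((-1)^(n+1) * xiR k αk (n+1)) := by
    rw [← he1, ← he2]
    linear_combination hc2 - αk⁻¹ * hc1
  have hξ1 := xiR_pos hk h n
  have hξ2 := xiR_pos hk h (n+1)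
  have hQ1 : (1:ℤ) ≤ Qd k (n+1) := (Qd_pos k n).1
  have hQ2 : (1:ℤ) ≤ Qd k (n+2) := (Qd_pos k (n+1)).1
  rcases eq_or_ne y 0 with hy0 | hy0
  · have hx0 : x ≠ 0 := by
      intro hx0
      rw [hx0, hy0] at hq_eq
      simp at hq_eq
      omega
    have hx1 : (1:ℝ) ≤ |(x:ℝ)| := by
      have := Int.one_le_abs hx0
      exact_mod_cast this
    rw [hkey, hy0]
    have habs : |(x:ℝ) * ((-1)^n * xiR k αk n) + ((0:ℤ):ℝ) * ((-1)^(n+1) * xiR k αk (n+1))|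
        = |(x:ℝ)| * xiR k αk n := by
      push_cast
      rw [zero_mul, add_zero, abs_mul, abs_mul, abs_pow, abs_neg, abs_one, one_pow, one_mul,
        abs_of_pos hξ1]
    rw [habs]
    nlinarith
  · rcases eq_or_ne x 0 with hx0 | hx0
    · exfalso
      rw [hx0] at hq_eq
      simp at hq_eq
      rcases lt_or_gt_of_ne hy0 with hy1 | hy1
      · nlinarith
      · nlinarith
    · have hxy : ((1:ℤ) ≤ x ∧ y ≤ -1) ∨ (x ≤ -1 ∧ (1:ℤ) ≤ y) := by
        rcases lt_or_gt_of_ne hx0 with hx1 | hx1 <;> rcases lt_or_gt_of_ne hy0 with hy1 | hy1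
        · exfalso; nlinarith
        · right; omega
        · left; omega
        · exfalso; nlinarith
      have habs : |(x:ℝ) * ((-1)^n * xiR k αk n) + (y:ℝ) * ((-1)^(n+1) * xiR k αk (n+1))|
          = |(x:ℝ) * xiR k αk n - (y:ℝ) * xiR k αk (n+1)| := by
        rw [show (x:ℝ) * ((-1)^n * xiR k αk n) + (y:ℝ) * ((-1)^(n+1) * xiR k αk (n+1))
            = (-1:ℝ)^n * ((x:ℝ) * xiR k αk n - (y:ℝ) * xiR k αk (n+1)) from by
          rw [pow_succ]; ring]
        rw [abs_mul, abs_pow, abs_neg, abs_one, one_pow, one_mul]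
      rw [hkey, habs]
      rcases hxy with ⟨hx1, hy1⟩ | ⟨hx1, hy1⟩
      · have hx1' : (1:ℝ) ≤ (x:ℝ) := by exact_mod_cast hx1
        have hy1' : (y:ℝ) ≤ -1 := by exact_mod_cast hy1
        rw [abs_of_pos (by nlinarith)]
        nlinarith
      · have hx1' : (x:ℝ) ≤ -1 := by exact_mod_cast hx1
        have hy1' : (1:ℝ) ≤ (y:ℝ) := by exact_mod_cast hy1
        rw [abs_of_neg (by nlinarith)]
        nlinarith

lemma psi_eq (hk : 1 ≤ k) (h : IsCFExp (aSeq k) αk) {n : ℕ} (hn : 1 ≤ n) {t : ℝ}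
    (h1 : (Qd k (n+1) : ℝ) ≤ t) (h2 : t < (Qd k (n+2) : ℝ)) :
    psi αk⁻¹ t = xiR k αk n := by
  have hξpos := xiR_pos hk h n
  have hξhalf := xiR_lt_half hk h hn
  have habs : |(Qd k (n+1) : ℝ) * αk⁻¹ - (Pd k (n+1) : ℝ)| = xiR k αk n := by
    rw [mul_comm, E_eq hk h n, abs_mul, abs_pow, abs_neg, abs_one, one_pow, one_mul,
      abs_of_pos hξpos]
  have hround : round ((Qd k (n+1) : ℝ) * αk⁻¹) = Pd k (n+1) :=
    round_eq_of_abs (by rw [habs]; linarith)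
  have hdist : intDist ((Qd k (n+1) : ℝ) * αk⁻¹) = xiR k αk n := by
    unfold intDist
    rw [hround, habs]
  have hmem : xiR k αk n ∈ {x : ℝ | ∃ q : ℤ, 1 ≤ q ∧ (q : ℝ) ≤ t ∧ x = intDist ((q : ℝ) * αk⁻¹)} := by
    refine ⟨Qd k (n+1), (Qd_pos k n).1, ?_, hdist.symm⟩
    exact h1
  have hlb : ∀ z ∈ {x : ℝ | ∃ q : ℤ, 1 ≤ q ∧ (q : ℝ) ≤ t ∧ x = intDist ((q : ℝ) * αk⁻¹)},
      xiR k αk n ≤ z := by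
    rintro z ⟨q, hq1, hqt, rfl⟩
    have hq2 : q < Qd k (n+2) := by
      have : (q:ℝ) < (Qd k (n+2) : ℝ) := lt_of_le_of_lt hqt h2
      exact_mod_cast this
    have := best_approx hk h n q (round ((q:ℝ) * αk⁻¹)) hq1 hq2
    exact this
  exact (IsLeast.csInf_eq ⟨hmem, hlb⟩)

end Main
end Stmt6
namespace Stmt6
open Matrix

/-- One-step transfer matrix. -/
def Cmat (a : ℤ) : Matrix (Fin 2) (Fin 2) ℤ := !![0, 1; 1, a]

/-- Product of transfer matrices. -/
def Mm (k : ℕ) : ℕ → Matrix (Fin 2) (Fin 2) ℤ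
  | 0 => 1
  | n+1 => Mm k n * Cmat (invSeq k (n+1))

lemma Cmat_symm (a : ℤ) : (Cmat a)ᵀ = Cmat a := by
  unfold Cmat
  ext i j
  fin_cases i <;> fin_cases j <;> simp [Matrix.transpose_apply]

lemma Mm_entries (k : ℕ) : ∀ n, Mm k n = !![Pd k n, Pd k (n+1); Qd k n, Qd k (n+1)] := by
  intro n
  induction n with
  | zero =>
    show (1 : Matrix (Fin 2) (Fin 2) ℤ) = _
    rw [Matrix.one_fin_two]
    congr 1 <;> simp [Pd, Qd]
  | succ n ih =>
    show Mm k n * Cmat (invSeq k (n+1)) = _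
    rw [ih]
    unfold Cmat
    rw [Matrix.mul_fin_two]
    have hp := Pd_succ k n
    have hq := Qd_succ k n
    apply Matrix.ext
    intro i j
    fin_cases i <;> fin_cases j <;> simp [hp, hq] <;> ring

lemma mod_window {k n : ℕ} (hk : 1 ≤ k) (hn : n % (2*k) = 2*k - 1) (j : ℕ) :
    (n + 1 + j) % (2*k) = j % (2*k) := by
  have hdm := Nat.div_add_mod n (2*k)
  have hexp : 2*k * (n / (2*k) + 1) = 2*k * (n / (2*k)) + 2*k := by ring
  have : n + 1 + j = 2*k * (n / (2*k) + 1) + j := by omega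
  rw [this, Nat.mul_add_mod]

lemma Mm_step {k : ℕ} (hk : 1 ≤ k) {n : ℕ} (hn : n % (2*k) = 2*k - 1) :
    ∀ j, j ≤ 2*k - 1 → Mm k (n+1+j) = Mm k n * (Cmat 2 * (Cmat 1)^j) := by
  intro j
  induction j with
  | zero =>
    intro _
    have ha : invSeq k (n+1) = 2 := by
      apply invSeq_crit (by omega)
      have := mod_window hk hn 0
      simpa using this
    show Mm k n * Cmat (invSeq k (n+1)) = _
    rw [ha, pow_zero, mul_one]
  | succ j ih =>
    intro hj
    have ha : invSeq k (n+1+j+1) = 1 := by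
      apply invSeq_noncrit (by omega)
      have := mod_window hk hn (j+1)
      rw [show n+1+(j+1) = n+1+j+1 from by omega] at this
      rw [this, Nat.mod_eq_of_lt (by omega)]
      omega
    show Mm k (n+1+j) * Cmat (invSeq k (n+1+j+1)) = _
    rw [ha, ih (by omega), pow_succ, ← mul_assoc, ← mul_assoc, ← mul_assoc]

lemma Mm_init {k : ℕ} (hk : 1 ≤ k) : ∀ j, j ≤ 2*k - 1 → Mm k j = (Cmat 1)^j := by
  intro j
  induction j with
  | zero => intro _; rfl
  | succ j ih =>
    intro hj
    have ha : invSeq k (j+1) = 1 := by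
      apply invSeq_noncrit (by omega)
      rw [Nat.mod_eq_of_lt (by omega)]
      omega
    show Mm k j * Cmat (invSeq k (j+1)) = _
    rw [ha, ih (by omega), pow_succ]

lemma Mm_crit {k : ℕ} (hk : 1 ≤ k) :
    ∀ m, Mm k (2*k - 1 + 2*k*m) = (Cmat 1)^(2*k-1) * (Cmat 2 * (Cmat 1)^(2*k-1))^m := by
  intro m
  induction m with
  | zero => simpa using Mm_init hk (2*k-1) le_rfl
  | succ m ih =>
    have hn : (2*k - 1 + 2*k*m) % (2*k) = 2*k - 1 := by
      rw [Nat.add_mul_mod_self_left]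
      exact Nat.mod_eq_of_lt (by omega)
    have hstep := Mm_step hk hn (2*k-1) le_rfl
    have hexp : 2*k*(m+1) = 2*k*m + 2*k := by ring
    rw [show 2*k-1+2*k*m+1+(2*k-1) = 2*k-1+2*k*(m+1) from by omega] at hstep
    rw [hstep, ih, pow_succ]
    simp only [mul_assoc]

lemma palindrome {k : ℕ} (hk : 1 ≤ k) {n : ℕ} (hn : n % (2*k) = 2*k - 1) :
    Pd k (n+1) = Qd k n := by
  have hdecomp : n = 2*k - 1 + 2*k*(n / (2*k)) := by
    have := Nat.div_add_mod n (2*k)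
    omega
  have hMn : Mm k n = (Cmat 1)^(2*k-1) * (Cmat 2 * (Cmat 1)^(2*k-1))^(n/(2*k)) := by
    conv_lhs => rw [hdecomp]
    exact Mm_crit hk _
  have hsemi : SemiconjBy ((Cmat 1)^(2*k-1)) (Cmat 2 * (Cmat 1)^(2*k-1))
      ((Cmat 1)^(2*k-1) * Cmat 2) := by
    unfold SemiconjBy
    rw [← mul_assoc]
  have hsymm : (Mm k n)ᵀ = Mm k n := by
    rw [hMn, Matrix.transpose_mul, Matrix.transpose_pow, Matrix.transpose_mul,
      Matrix.transpose_pow, Cmat_symm, Cmat_symm]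
    exact (hsemi.pow_right (n/(2*k))).symm
  have hPQ := Mm_entries k n
  have hentry := congrArg (fun M : Matrix (Fin 2) (Fin 2) ℤ => M 0 1) hsymm
  simp only [Matrix.transpose_apply] at hentry
  rw [hPQ] at hentry
  simpa using hentry.symm

end Stmt6
namespace Stmt6

/-- Mirror tail values: `Sm n` is the limit of `q_{n-1}/q_n` along `n`'s residue class. -/
noncomputable def Sm (k : ℕ) (αk : ℝ) (n : ℕ) : ℝ := (Tm k αk (2*k - n % (2*k)))⁻¹

section Main
variable {k : ℕ} {αk : ℝ}

lemma Sm_pos (hk : 1 ≤ k) (h : IsCFExp (aSeq k) αk) (n : ℕ) : 0 < Sm k αk n :=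
  inv_pos.mpr (Tm_pos hk h _)

lemma Sm_le (hk : 1 ≤ k) (h : IsCFExp (aSeq k) αk) (n : ℕ) : Sm k αk n ≤ 3/4 := by
  have h1 := (Tm_bounds hk h (2*k - n % (2*k))).1
  have h2 := Tm_pos hk h (2*k - n % (2*k))
  rw [Sm, show (3:ℝ)/4 = (4/3 : ℝ)⁻¹ from by norm_num]
  exact inv_anti₀ (by norm_num) h1

lemma Sm_rec (hk : 1 ≤ k) (h : IsCFExp (aSeq k) αk) (n : ℕ) :
    Sm k αk (n+1) = ((invSeq k (n+1) : ℝ) + Sm k αk n)⁻¹ := by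
  have h2k : 0 < 2*k := by omega
  have hdm := Nat.div_add_mod n (2*k)
  set j := n % (2*k) with hj
  have hjlt : j < 2*k := Nat.mod_lt _ h2k
  by_cases hcase : j = 2*k - 1
  · have hn1 : (n+1) % (2*k) = 0 := by
      have : n + 1 = 2*k * (n/(2*k)) + 2*k := by omega
      rw [this, show 2*k*(n/(2*k)) + 2*k = 2*k*(n/(2*k)+1) + 0 from by ring]
      rw [Nat.mul_add_mod]
      exact Nat.zero_mod _
    have ha : invSeq k (n+1) = 2 := invSeq_crit (by omega) hn1
    have hrec := Tm_rec hk h (2*k) (by omega)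
    have hper : Tm k αk (2*k + 1) = Tm k αk 1 := by
      rw [show 2*k+1 = 1+2*k from by omega]
      exact Tm_periodic hk 1 (by omega)
    have ha2 : invSeq k (2*k) = 2 := invSeq_crit (by omega) (Nat.mod_self (2*k))
    unfold Sm
    rw [hn1, ← hj, hcase, Nat.sub_zero, show 2*k - (2*k-1) = 1 from by omega]
    rw [ha, hrec, hper, ha2]
    push_cast
    rw [one_div]
  · have hn1 : (n+1) % (2*k) = j + 1 := by
      have : n + 1 = 2*k * (n/(2*k)) + (j+1) := by omega
      rw [this, Nat.mul_add_mod, Nat.mod_eq_of_lt (by omega)]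
    have ha : invSeq k (n+1) = 1 := invSeq_noncrit (by omega) (by rw [hn1]; omega)
    have hm1 : 1 ≤ 2*k - (j+1) := by omega
    have hrec := Tm_rec hk h (2*k - (j+1)) hm1
    have ham : invSeq k (2*k - (j+1)) = 1 := by
      apply invSeq_noncrit hm1
      rw [Nat.mod_eq_of_lt (by omega)]
      omega
    unfold Sm
    rw [hn1, ← hj]
    rw [show 2*k - (j+1) + 1 = 2*k - j from by omega] at hrec
    rw [hrec, ham, ha]
    push_cast
    rw [one_div]

lemma Sm_invariant (hk : 1 ≤ k) (h : IsCFExp (aSeq k) αk) :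
    ∀ n, 1 ≤ n → (Odd n → Sm k αk n < (Qd k n : ℝ) / (Qd k (n+1) : ℝ))
      ∧ (Even n → (Qd k n : ℝ) / (Qd k (n+1) : ℝ) < Sm k αk n) := by
  intro n hn
  induction n, hn using Nat.le_induction with
  | base =>
    have hQ2 : Qd k 2 = 1 := by
      rw [Qd_succ]
      have : invSeq k 1 = 1 := invSeq_noncrit (by omega) (by rw [Nat.mod_eq_of_lt (by omega)]; omega)
      rw [this]
      simp [Qd]
    constructor
    · intro _
      have := Sm_le hk h 1
      rw [hQ2]
      show Sm k αk 1 < ((1:ℤ):ℝ) / ((1:ℤ):ℝ)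
      push_cast
      norm_num
      linarith
    · intro he
      exact absurd he (by simp)
  | succ n hn ih =>
    have hrec := Sm_rec hk h n
    have hu : (0:ℝ) < (Qd k (n+1) : ℝ) := by exact_mod_cast (Qd_pos k n).1
    have hu2 : (0:ℝ) < (Qd k (n+2) : ℝ) := by exact_mod_cast (Qd_pos k (n+1)).1
    have hv : (0:ℝ) ≤ (Qd k n : ℝ) := by exact_mod_cast (Qd_pos k n).2
    have ha1 : 1 ≤ invSeq k (n+1) := (invSeq_bounds (by omega)).1
    have ha1' : (1:ℝ) ≤ (invSeq k (n+1) : ℝ) := by exact_mod_cast ha1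
    have hcomb : ((invSeq k (n+1) : ℝ)) + (Qd k n : ℝ) / (Qd k (n+1) : ℝ)
        = ((invSeq k (n+1) : ℝ) * (Qd k (n+1) : ℝ) + (Qd k n : ℝ)) / (Qd k (n+1) : ℝ) := by
      field_simp
    have hr : (Qd k (n+1) : ℝ) / (Qd k (n+2) : ℝ)
        = (((invSeq k (n+1) : ℝ)) + (Qd k n : ℝ) / (Qd k (n+1) : ℝ))⁻¹ := by
      rw [hcomb, inv_div, Qd_succ]
      push_cast
      rfl
    have hrpos : (0:ℝ) ≤ (Qd k n : ℝ) / (Qd k (n+1) : ℝ) := div_nonneg hv (le_of_lt hu)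
    have hSpos := Sm_pos hk h n
    constructor
    · intro hodd
      have he : Even n := by
        rcases Nat.even_or_odd n with he | ho
        · exact he
        · exact absurd (Odd.add_one ho) (by simpa using hodd)
      have hlt := ih.2 he
      rw [hrec, hr]
      exact inv_strictAnti₀ (by linarith) (by linarith)
    · intro heven
      have ho : Odd n := by
        rcases Nat.even_or_odd n with he | ho
        · exact absurd (Even.add_one he) (by simpa using heven)
        · exact ho
      have hlt := ih.1 ho
      rw [hrec, hr]
      exact inv_strictAnti₀ (by linarith) (by linarith)

lemma classB_bound (hk : 1 ≤ k) (h : IsCFExp (aSeq k) αk) {n : ℕ} (hn : 1 ≤ n)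
    (hb : (n+1) % (2*k) = 2*k - 1) : (Qd k n : ℝ) < (αk - 1) * (Qd k (n+1) : ℝ) := by
  have h2k : 0 < 2*k := by omega
  have hdm := Nat.div_add_mod (n+1) (2*k)
  have hk2 : 2*k - 1 < 2*k := by omega
  have hndec : n = 2*k*((n+1)/(2*k)) + (2*k - 2) := by omega
  have hmod : n % (2*k) = 2*k - 2 := by
    rw [hndec, Nat.mul_add_mod, Nat.mod_eq_of_lt (by omega)]
  have heven : Even n := by
    have hX : 2*k*((n+1)/(2*k)) = 2*(k*((n+1)/(2*k))) := by ring
    rw [hX] at hndec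
    exact Nat.even_iff.mpr (by omega)
  have hinv := (Sm_invariant hk h n hn).2 heven
  have hSm : Sm k αk n = (Tm k αk 2)⁻¹ := by
    unfold Sm
    rw [hmod, show 2*k - (2*k-2) = 2 from by omega]
  have hrec := Tm_rec hk h 1 (by omega)
  have ha1 : invSeq k 1 = 1 :=
    invSeq_noncrit (by omega) (by rw [Nat.mod_eq_of_lt (by omega)]; omega)
  rw [Tm_one hk h, ha1] at hrec
  have hT2 : (Tm k αk 2)⁻¹ = αk - 1 := by
    push_cast at hrec
    rw [one_div] at hrec
    linarith
  rw [hSm, hT2] at hinv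
  have hu : (0:ℝ) < (Qd k (n+1) : ℝ) := by exact_mod_cast (Qd_pos k n).1
  calc (Qd k n : ℝ) = ((Qd k n : ℝ)/(Qd k (n+1):ℝ)) * (Qd k (n+1) : ℝ) := by field_simp
    _ < (αk - 1) * (Qd k (n+1) : ℝ) := mul_lt_mul_of_pos_right hinv hu

end Main
end Stmt6
namespace Stmt6
section Main
variable {k : ℕ} {αk : ℝ}

lemma alphak_refined (hk : 1 ≤ k) (h : IsCFExp (aSeq k) αk) : 4/3 ≤ αk ∧ αk ≤ 7/4 := by
  have hrec := Tm_rec hk h 1 (by omega)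
  have ha1 : invSeq k 1 = 1 :=
    invSeq_noncrit (by omega) (by rw [Nat.mod_eq_of_lt (by omega)]; omega)
  rw [Tm_one hk h, ha1] at hrec
  push_cast at hrec
  rw [one_div] at hrec
  obtain ⟨hb1, hb3⟩ := Tm_bounds hk h 2
  have hp := Tm_pos hk h 2
  have h1 : (Tm k αk 2)⁻¹ ≤ 3/4 := by
    rw [show (3:ℝ)/4 = ((4:ℝ)/3)⁻¹ from by norm_num]
    exact inv_anti₀ (by norm_num) hb1
  have h2 : (1:ℝ)/3 ≤ (Tm k αk 2)⁻¹ := by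
    rw [show (1:ℝ)/3 = ((3:ℝ))⁻¹ from by norm_num]
    exact inv_anti₀ hp hb3
  constructor <;> linarith

lemma Dk_bounds (hk : 1 ≤ k) (h : IsCFExp (aSeq k) αk) :
    11/14 ≤ Dk αk ∧ Dk αk ≤ 9/11 := by
  obtain ⟨h1, h2⟩ := alphak_refined hk h
  have hden : (0:ℝ) < 2*αk + 2 := by linarith
  unfold Dk
  constructor
  · rw [le_div_iff₀ hden]; nlinarith
  · rw [div_le_iff₀ hden]; nlinarith

lemma Dk_lt_one (hk : 1 ≤ k) (h : IsCFExp (aSeq k) αk) : Dk αk < 1 := by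
  obtain ⟨h1, h2⟩ := alphak_refined hk h
  have hden : (0:ℝ) < 2*αk + 2 := by linarith
  unfold Dk
  rw [div_lt_one hden]; linarith

lemma Dk_form (hk : 1 ≤ k) (h : IsCFExp (aSeq k) αk) (x : ℝ) :
    Dk αk + (1 - Dk αk) * x^2 = ((2*αk+1) + x^2)/(2*αk+2) := by
  obtain ⟨h1, _⟩ := alphak_refined hk h
  have hden : (0:ℝ) < 2*αk + 2 := by linarith
  unfold Dk
  field_simp
  ring

/-- Exact second-order identity at critical indices. -/
lemma key_eq (hk : 1 ≤ k) (h : IsCFExp (aSeq k) αk) {n : ℕ} (hn : 1 ≤ n)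
    (hc : (n+1) % (2*k) = 0) :
    (Qd k (n+2) : ℝ) * xiR k αk n = Dk αk + (1 - Dk αk) * (xiR k αk n)^2 := by
  have h2k : 0 < 2*k := by omega
  obtain ⟨s, hs⟩ : ∃ s, n + 1 = 2*k*s := ⟨(n+1)/(2*k), by
    have := Nat.div_add_mod (n+1) (2*k); omega⟩
  have hs1 : 1 ≤ s := by by_contra hcon; push_neg at hcon; interval_cases s <;> omega
  have hX : 2*k*s = 2*k*(s-1) + 2*k := by
    have : 2*k*s = 2*k*((s-1)+1) := by congr 1; omega
    rw [this]; ring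
  have hnd : n = 2*k*(s-1) + (2*k-1) := by omega
  have hmod : n % (2*k) = 2*k - 1 := by
    rw [hnd, Nat.mul_add_mod, Nat.mod_eq_of_lt (by omega)]
  have hodd : Odd n := by
    have hX2 : 2*k*(s-1) = 2*(k*(s-1)) := by ring
    rw [hX2] at hnd
    exact Nat.odd_iff.mpr (by omega)
  have hA : (4:ℝ)/3 ≤ αk := (alphak_refined hk h).1
  have hane : αk ≠ 0 := by linarith
  have hT : Tm k αk (n+1) = 2 + αk⁻¹ := by
    unfold Tm
    rw [show n+1-1 = n from by omega, hmod, show 2*k-1-(2*k-1) = 0 from by omega]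
    simp [valR, one_div]
  have hpal : Pd k (n+1) = Qd k n := palindrome hk hmod
  have hE := E_eq hk h n
  have hneg : ((-1:ℝ))^n = -1 := Odd.neg_one_pow hodd
  rw [hneg, hpal] at hE
  have hxi := xiR_mul hk h n
  rw [hT] at hxi
  have ha2 : invSeq k (n+1) = 2 := invSeq_crit (by omega) hc
  have hQ2 : (Qd k (n+2) : ℝ) = 2*(Qd k (n+1):ℝ) + (Qd k n : ℝ) := by
    rw [Qd_succ, ha2]; push_cast; ring
  have hab : αk⁻¹ * αk = 1 := inv_mul_cancel₀ hane
  have hden : (0:ℝ) < 2*αk + 2 := by linarith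
  set u := (Qd k (n+1) : ℝ)
  set v := (Qd k n : ℝ)
  set ξ := xiR k αk n with hξdef
  -- hE : αk⁻¹ * u - v = -1 * ξ ;  hxi : ξ * ((2 + αk⁻¹)*u + v) = 1
  have hg : (2*u + v) * ξ * (2*αk+2) = (2*αk+1) + ξ^2 := by
    linear_combination (2*αk+1) * hxi - ξ * hE - 2*ξ*u*hab
  rw [hQ2, Dk_form hk h, eq_div_iff (ne_of_gt hden)]
  linear_combination hg

lemma r_bound (k : ℕ) {n : ℕ} (hn : 2 ≤ n) : 4 * Qd k n ≤ 3 * Qd k (n+1) := by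
  have hrec1 : Qd k (n+1) = invSeq k n * Qd k n + Qd k (n-1) := by
    have := Qd_succ k (n-1)
    rw [show n-1+2 = n+1 from by omega, show n-1+1 = n from by omega] at this
    exact this
  have hrec0 : Qd k n = invSeq k (n-1) * Qd k (n-1) + Qd k (n-2) := by
    have := Qd_succ k (n-2)
    rw [show n-2+2 = n from by omega, show n-2+1 = n-1 from by omega] at this
    exact this
  have ha0 := invSeq_bounds (k := k) (m := n-1) (by omega)
  have ha1 := invSeq_bounds (k := k) (m := n) (by omega)
  have hq1 : 1 ≤ Qd k (n-1) := by
    have := (Qd_pos k (n-2)).1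
    rwa [show n-2+1 = n-1 from by omega] at this
  have hq2 : 0 ≤ Qd k (n-2) := (Qd_pos k (n-2)).2
  have hmono : Qd k (n-2) ≤ Qd k (n-1) := by
    rcases Nat.eq_or_lt_of_le hn with he | hl
    · rw [show n-2 = 0 from by omega, show n-1 = 1 from by omega]
      simp [Qd]
    · have := Qd_mono k (n-3)
      rwa [show n-3+1 = n-2 from by omega, show n-3+2 = n-1 from by omega] at this
  have hup : Qd k n ≤ 3 * Qd k (n-1) := by nlinarith
  have hQn0 : 0 ≤ Qd k n := (Qd_pos k n).2
  nlinarith [mul_le_mul_of_nonneg_right ha1.1 hQn0]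

/-- The master inequality, for all `n ≥ 2`. -/
lemma key_ineq (hk : 1 ≤ k) (h : IsCFExp (aSeq k) αk) {n : ℕ} (hn : 2 ≤ n) :
    (Qd k (n+2) : ℝ) * xiR k αk n ≤ Dk αk + (1 - Dk αk) * (xiR k αk n)^2 := by
  have h2k : 0 < 2*k := by omega
  obtain ⟨hA1, hA2⟩ := alphak_refined hk h
  have hane : αk ≠ 0 := by linarith
  have hξ := xiR_pos hk h n
  have hu : (1:ℝ) ≤ (Qd k (n+1):ℝ) := by exact_mod_cast (Qd_pos k n).1
  have hv0 : (0:ℝ) ≤ (Qd k n:ℝ) := by exact_mod_cast (Qd_pos k n).2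
  have hden : (0:ℝ) < 2*αk + 2 := by linarith
  by_cases hc : (n+1) % (2*k) = 0
  · exact le_of_eq (key_eq hk h (by omega) hc)
  by_cases hb : (n+1) % (2*k) = 2*k - 1
  · -- class B : next partial quotient is 2
    have ha1 : invSeq k (n+1) = 1 := invSeq_noncrit (by omega) hc
    have hmod : n % (2*k) = 2*k - 2 := by
      have hdm := Nat.div_add_mod (n+1) (2*k)
      have hndec : n = 2*k*((n+1)/(2*k)) + (2*k - 2) := by omega
      rw [hndec, Nat.mul_add_mod, Nat.mod_eq_of_lt (by omega)]
    have hT : Tm k αk (n+1) = (3*αk+1)/(2*αk+1) := by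
      unfold Tm
      rw [show n+1-1 = n from by omega, hmod, show 2*k-1-(2*k-2) = 1 from by omega]
      show valR (1 :: [2]) αk = _
      rw [valR_cons, valR_cons, valR_nil]
      push_cast
      have h1 : (0:ℝ) < αk := by linarith
      have h2 : (0:ℝ) < 2 + 1/αk := by positivity
      have h3 : (0:ℝ) < 2*αk + 1 := by linarith
      field_simp
      ring
    have hvlt := classB_bound hk h (by omega) hb
    have hxi := xiR_mul hk h n
    have hQ2 : (Qd k (n+2) : ℝ) = (Qd k (n+1):ℝ) + (Qd k n : ℝ) := by
      rw [Qd_succ, ha1]; push_cast; ring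
    set u := (Qd k (n+1) : ℝ)
    set v := (Qd k n : ℝ)
    set ξ := xiR k αk n
    have hTform : Tm k αk (n+1) * (2*αk+1) = 3*αk+1 := by
      rw [hT]
      field_simp
    have hxi1 : ξ * ((3*αk+1) * u + (2*αk+1) * v) = 2*αk+1 := by
      linear_combination (2*αk+1)*hxi - ξ*u*hTform
    have hvξ : ξ * v ≤ ξ * ((αk - 1)*u) :=
      mul_le_mul_of_nonneg_left (le_of_lt hvlt) (le_of_lt hξ)
    have hprod : (2*αk+1)*(ξ*v) ≤ (2*αk+1)*(ξ*((αk-1)*u)) :=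
      mul_le_mul_of_nonneg_left hvξ (by linarith)
    have hstep : (2*αk+1) ≤ 2*αk*(αk+1)*(u*ξ) := by linarith [hxi1, hprod]
    have hvε2 : (2*αk+2)*((2*αk+1)*(v*ξ))
        = (2*αk+2)*((2*αk+1) - (3*αk+1)*(u*ξ)) := by
      linear_combination (2*αk+2)*hxi1
    have hsqA : (0:ℝ) ≤ (2*αk+1)*ξ^2 :=
      mul_nonneg (by linarith) (sq_nonneg ξ)
    rw [hQ2, Dk_form hk h, le_div_iff₀ hden]
    have h2A1 : (0:ℝ) < 2*αk+1 := by linarith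
    have hgoal2 : ((u+v)*ξ*(2*αk+2)) * (2*αk+1) ≤ ((2*αk+1) + ξ^2) * (2*αk+1) := by
      nlinarith [hvε2, hstep, hsqA]
    exact le_of_mul_le_mul_right hgoal2 h2A1
  · -- generic case : two 1s ahead
    have ha1 : invSeq k (n+1) = 1 := invSeq_noncrit (by omega) hc
    have hmlt : (n+1) % (2*k) < 2*k := Nat.mod_lt _ h2k
    have hm2 : (n+2) % (2*k) = (n+1) % (2*k) + 1 := by
      conv_lhs => rw [show n+2 = (n+1)+1 from rfl]
      rw [Nat.add_mod, Nat.mod_eq_of_lt (show 1 < 2*k from by omega),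
        Nat.mod_eq_of_lt (by omega)]
    have ha2 : invSeq k (n+2) = 1 := invSeq_noncrit (by omega) (by omega)
    have hT3 := (Tm_bounds hk h (n+3)).1
    have hp3 := Tm_pos hk h (n+3)
    have hp2 := Tm_pos hk h (n+2)
    have hrec2 := Tm_rec hk h (n+2) (by omega)
    have hrec1 := Tm_rec hk h (n+1) (by omega)
    rw [ha2] at hrec2
    rw [ha1] at hrec1
    rw [show n+2+1 = n+3 from rfl] at hrec2
    rw [show n+1+1 = n+2 from rfl] at hrec1
    push_cast at hrec1 hrec2
    have hT2ub : Tm k αk (n+2) ≤ 7/4 := by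
      have h34 : 1/Tm k αk (n+3) ≤ 3/4 := by
        rw [one_div, show (3:ℝ)/4 = ((4:ℝ)/3)⁻¹ from by norm_num]
        exact inv_anti₀ (by norm_num) hT3
      linarith
    have hT1lb : 3/2 ≤ Tm k αk (n+1) := by
      have h47 : ((7:ℝ)/4)⁻¹ ≤ 1/Tm k αk (n+2) := by
        rw [one_div]
        exact inv_anti₀ hp2 hT2ub
      have : (4:ℝ)/7 ≤ 1/Tm k αk (n+2) := by
        rw [show ((7:ℝ)/4)⁻¹ = 4/7 from by norm_num] at h47
        exact h47
      linarith
    have hr4 : 4*(Qd k n:ℝ) ≤ 3*(Qd k (n+1):ℝ) := by exact_mod_cast r_bound k hn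
    have hxi := xiR_mul hk h n
    have hQ2 : (Qd k (n+2):ℝ) = (Qd k (n+1):ℝ) + (Qd k n:ℝ) := by
      rw [Qd_succ, ha1]; push_cast; ring
    have hD := (Dk_bounds hk h).1
    have hD1 := Dk_lt_one hk h
    have hval : (Qd k (n+2):ℝ) * xiR k αk n ≤ 7/9 := by
      rw [hQ2]
      have hTu : (3:ℝ)/2 * (Qd k (n+1):ℝ) ≤ Tm k αk (n+1) * (Qd k (n+1):ℝ) :=
        mul_le_mul_of_nonneg_right hT1lb (by linarith)
      have h9 : 9*((Qd k (n+1):ℝ) + (Qd k n:ℝ))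
          ≤ 7*(Tm k αk (n+1) * (Qd k (n+1):ℝ) + (Qd k n:ℝ)) := by linarith
      have h10 := mul_le_mul_of_nonneg_left h9 (le_of_lt hξ)
      have h11 : xiR k αk n * (7*(Tm k αk (n+1) * (Qd k (n+1):ℝ) + (Qd k n:ℝ))) = 7 := by
        linear_combination 7*hxi
      linarith
    have hsq : (0:ℝ) ≤ (1 - Dk αk) * (xiR k αk n)^2 :=
      mul_nonneg (by linarith) (sq_nonneg _)
    calc (Qd k (n+2):ℝ) * xiR k αk n ≤ 7/9 := hval
      _ ≤ Dk αk + (1 - Dk αk) * (xiR k αk n)^2 := by linarith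

end Main
end Stmt6
namespace Stmt6
section Main
variable {k : ℕ} {αk : ℝ}

lemma g_lemma (hk : 1 ≤ k) (h : IsCFExp (aSeq k) αk) {t ξ : ℝ} (ht : 2 ≤ t) (hξ : 0 < ξ)
    (hξ2 : ξ ≤ 1/2) (hbound : t * ξ < Dk αk + (1 - Dk αk) * ξ^2) : t * ξ < gFun αk t := by
  obtain ⟨hD1, hD2⟩ := Dk_bounds hk h
  have hD1' : Dk αk < 1 := Dk_lt_one hk h
  set D := Dk αk with hD_def
  have hDpos : 0 < D := by linarith only [hD1]
  have ht0 : (0:ℝ) < t := by linarith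
  have ht2 : (4:ℝ) ≤ t^2 := by nlinarith
  have h4 : 4*D*(1-D) ≤ 1 := by nlinarith [sq_nonneg (2*D-1)]
  have hDD : 0 < 4*D*(1-D) := by nlinarith
  have harg : 0 ≤ 1 - 4*D*(1-D)/t^2 := by
    have : 4*D*(1-D)/t^2 ≤ 1 := by
      rw [div_le_one (by positivity)]
      linarith
    linarith
  set s := Real.sqrt (1 - 4*D*(1-D)/t^2) with hs_def
  have hs0 : 0 ≤ s := Real.sqrt_nonneg _
  have hs2 : s^2 = 1 - 4*D*(1-D)/t^2 := Real.sq_sqrt harg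
  have hs1 : s ≤ 1 := by
    have harg1 : 1 - 4*D*(1-D)/t^2 ≤ 1 := by
      have : 0 < 4*D*(1-D)/t^2 := by positivity
      linarith
    calc s ≤ Real.sqrt 1 := Real.sqrt_le_sqrt harg1
      _ = 1 := Real.sqrt_one
  have hg : gFun αk t = 2*D/(1+s) := by
    rw [gFun, hD_def]
  have h1s : (0:ℝ) < 1 + s := by linarith
  have hs2' : s^2 * t^2 = t^2 - 4*D*(1-D) := by
    rw [hs2]
    field_simp
  have hquad : (1-D)*(gFun αk t)^2 - t^2*(gFun αk t) + D*t^2 = 0 := by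
    rw [hg]
    field_simp
    linear_combination D * hs2'
  have hφ : (1-D)*(t*ξ)^2 - t^2*(t*ξ) + D*t^2 > 0 := by
    have hpos := mul_pos (pow_pos ht0 2) (sub_pos.mpr hbound)
    nlinarith only [hpos]
  by_contra hcon
  push_neg at hcon
  have hg2D : gFun αk t ≤ 2*D := by
    rw [hg]
    apply div_le_self (by linarith) (by linarith)
  have hgpos : 0 < gFun αk t := by
    rw [hg]
    positivity
  have hξsq : ξ^2 ≤ 1/4 := by nlinarith only [hξ, hξ2]
  have h14 : (1-D)*ξ^2 ≤ (1-D)*(1/4) :=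
    mul_le_mul_of_nonneg_left hξsq (by linarith only [hD1'])
  have htξ1 : t*ξ < 1 := by linarith only [hbound, h14, hD2]
  have hfac : (0:ℝ) ≤ t^2 - (1-D)*(t*ξ + gFun αk t) := by
    have hsum : t*ξ + gFun αk t ≤ 3 := by linarith only [htξ1, hg2D, hD2]
    have hsumpos : 0 ≤ t*ξ + gFun αk t := by positivity
    have hprod : (1-D)*(t*ξ + gFun αk t) ≤ (3:ℝ)/14 * 3 := by
      apply mul_le_mul (by linarith only [hD1]) hsum hsumpos (by norm_num)
    linarith only [hprod, ht2]
  have hprod2 : (0:ℝ) ≤ (t*ξ - gFun αk t) * (t^2 - (1-D)*(t*ξ + gFun αk t)) :=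
    mul_nonneg (by linarith) hfac
  linarith only [hφ, hquad, hprod2]

end Main
end Stmt6
namespace Stmt6
section Main
variable {k : ℕ} {αk : ℝ}

lemma part_a (hk : 1 ≤ k) (h : IsCFExp (aSeq k) αk) :
    ∀ᶠ t : ℝ in Filter.atTop, t * psi αk⁻¹ t < gFun αk t := by
  classical
  have hQ4 : (3:ℤ) ≤ Qd k 4 := Qd_ge k 3
  filter_upwards [Filter.eventually_ge_atTop ((Qd k 4 : ℝ))] with t ht
  have ht3 : (3:ℝ) ≤ t := le_trans (by exact_mod_cast hQ4) ht
  set P : ℕ → Prop := fun m => (Qd k (m+1) : ℝ) ≤ t with hP_def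
  have hP3 : P 3 := ht
  have hPbound : ∀ m, P m → m ≤ Nat.floor t := by
    intro m hm
    have h1 : (m:ℝ) ≤ (Qd k (m+1) : ℝ) := by exact_mod_cast Qd_ge k m
    exact Nat.le_floor (le_trans h1 hm)
  set N := Nat.floor t + 1 with hN_def
  set n := Nat.findGreatest P N with hn_def
  have h3N : 3 ≤ N := by
    have := hPbound 3 hP3
    omega
  have hn3 : 3 ≤ n := Nat.le_findGreatest h3N hP3
  have hnP : P n := Nat.findGreatest_spec h3N hP3
  have hnotP : ¬ P (n+1) := by
    intro hP1
    have hle : n+1 ≤ N := by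
      have := hPbound _ hP1
      omega
    exact (Nat.findGreatest_is_greatest (show Nat.findGreatest P N < n+1 by omega) hle) hP1
  have hlt : t < (Qd k (n+2) : ℝ) := not_le.mp hnotP
  have hψ := psi_eq hk h (show 1 ≤ n by omega) hnP hlt
  rw [hψ]
  have hki := key_ineq hk h (show 2 ≤ n by omega)
  have hξ := xiR_pos hk h n
  have hbound : t * xiR k αk n < Dk αk + (1 - Dk αk)*(xiR k αk n)^2 := by
    have h1 : t * xiR k αk n < (Qd k (n+2):ℝ) * xiR k αk n :=
      mul_lt_mul_of_pos_right hlt hξ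
    linarith only [h1, hki]
  exact g_lemma hk h (by linarith only [ht3]) hξ (le_of_lt (xiR_lt_half hk h (by omega))) hbound

lemma gFun_tendsto (hk : 1 ≤ k) (h : IsCFExp (aSeq k) αk) :
    Filter.Tendsto (fun x : ℝ => gFun αk x) Filter.atTop (nhds (Dk αk)) := by
  have hD1 := (Dk_bounds hk h).1
  have hc : Filter.Tendsto (fun x : ℝ => 4 * Dk αk * (1 - Dk αk) / x ^ 2)
      Filter.atTop (nhds 0) := by
    apply Filter.Tendsto.div_atTop tendsto_const_nhds
    exact tendsto_pow_atTop (by norm_num)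
  have hs : Filter.Tendsto (fun x : ℝ => Real.sqrt (1 - 4 * Dk αk * (1 - Dk αk) / x ^ 2))
      Filter.atTop (nhds 1) := by
    have h1 : Filter.Tendsto (fun x : ℝ => 1 - 4 * Dk αk * (1 - Dk αk) / x ^ 2)
        Filter.atTop (nhds 1) := by
      have := Filter.Tendsto.sub (tendsto_const_nhds (x := (1:ℝ))) hc
      simpa using this
    have h2 : Filter.Tendsto Real.sqrt (nhds 1) (nhds 1) := by
      have := Real.continuous_sqrt.continuousAt (x := (1:ℝ))
      simpa [Real.sqrt_one] using this.tendsto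
    exact h2.comp h1
  have hden : Filter.Tendsto (fun x : ℝ => 1 + Real.sqrt (1 - 4 * Dk αk * (1 - Dk αk) / x ^ 2))
      Filter.atTop (nhds 2) := by
    have := Filter.Tendsto.add (tendsto_const_nhds (x := (1:ℝ))) hs
    norm_num at this
    exact this
  have hlim := Filter.Tendsto.div (tendsto_const_nhds (x := 2 * Dk αk)) hden (by norm_num)
  have : 2 * Dk αk / 2 = Dk αk := by ring
  rw [this] at hlim
  exact hlim

lemma part_b (hk : 1 ≤ k) (h : IsCFExp (aSeq k) αk) :
    ∃ Q : ℕ → ℕ, StrictMono Q ∧ (∀ n, 2 ≤ Q n) ∧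
      Filter.Tendsto (fun n => (Q n : ℝ) * psi αk⁻¹ ((Q n : ℝ) - 1) / gFun αk (Q n))
        Filter.atTop (nhds 1) := by
  have hDpos : (0:ℝ) < Dk αk := lt_of_lt_of_le (by norm_num) (Dk_bounds hk h).1
  have hidx : ∀ m : ℕ, 1 ≤ 2*k*(m+1) := fun m => by
    simpa using Nat.mul_le_mul (show 1 ≤ 2*k by omega) (show 1 ≤ m+1 by omega)
  have hQpos : ∀ m : ℕ, (0:ℤ) ≤ Qd k (2*k*(m+1)+1) :=
    fun m => le_trans zero_le_one (Qd_pos k (2*k*(m+1))).1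
  have hQge : ∀ m : ℕ, ((2*k*(m+1) : ℕ) : ℤ) ≤ Qd k (2*k*(m+1)+1) := fun m => Qd_ge k _
  refine ⟨fun m => (Qd k (2*k*(m+1)+1)).toNat, ?_, ?_, ?_⟩
  · intro m m' hmm
    have h2 : 2*k*(m+1) < 2*k*(m'+1) :=
      mul_lt_mul_of_pos_left (show m+1 < m'+1 by omega) (show 0 < 2*k by omega)
    have hlt := Qd_strict_of_lt k (hidx m) h2
    show (Qd k (2*k*(m+1)+1)).toNat < (Qd k (2*k*(m'+1)+1)).toNat
    have := hQpos m
    omega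
  · intro m
    have h4 : 2*1 ≤ 2*k*(m+1) := Nat.mul_le_mul (by omega) (by omega)
    have h2 : (2:ℤ) ≤ ((2*k*(m+1) : ℕ) : ℤ) := by exact_mod_cast h4
    have := hQge m
    show 2 ≤ (Qd k (2*k*(m+1)+1)).toNat
    omega
  · have hQcast : ∀ m : ℕ, (((Qd k (2*k*(m+1)+1)).toNat : ℕ) : ℝ) = (Qd k (2*k*(m+1)+1) : ℝ) := by
      intro m
      exact_mod_cast congrArg (fun z : ℤ => (z:ℝ)) (Int.toNat_of_nonneg (hQpos m))
    have hn1 : ∀ m : ℕ, (2*k*(m+1) - 1) + 1 = 2*k*(m+1) := fun m => by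
      have := hidx m; omega
    have hn2 : ∀ m : ℕ, (2*k*(m+1) - 1) + 2 = 2*k*(m+1)+1 := fun m => by
      have := hidx m; omega
    have hnm1 : ∀ m : ℕ, 1 ≤ 2*k*(m+1) - 1 := fun m => by
      have h4 : 2 ≤ 2*k*(m+1) := by
        have := Nat.mul_le_mul (show 2 ≤ 2*k by omega) (show 1 ≤ m+1 by omega)
        simpa using this
      omega
    set F : ℕ → ℝ := fun m => xiR k αk (2*k*(m+1) - 1) with hF_def
    have hψ : ∀ m : ℕ, psi αk⁻¹ ((Qd k (2*k*(m+1)+1) : ℝ) - 1) = F m := by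
      intro m
      have hstrict : Qd k ((2*k*(m+1)-1)+1) < Qd k ((2*k*(m+1)-1)+2) := Qd_strict k (hnm1 m)
      rw [hn1 m, hn2 m] at hstrict
      have h1 : (Qd k ((2*k*(m+1)-1)+1) : ℝ) ≤ (Qd k (2*k*(m+1)+1) : ℝ) - 1 := by
        rw [hn1 m]
        have : (Qd k (2*k*(m+1)) : ℝ) + 1 ≤ (Qd k (2*k*(m+1)+1) : ℝ) := by exact_mod_cast hstrict
        linarith
      have h2 : (Qd k (2*k*(m+1)+1) : ℝ) - 1 < (Qd k ((2*k*(m+1)-1)+2) : ℝ) := by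
        rw [hn2 m]
        linarith
      exact psi_eq hk h (hnm1 m) h1 h2
    have hkey : ∀ m : ℕ, (Qd k (2*k*(m+1)+1) : ℝ) * F m
        = Dk αk + (1 - Dk αk) * (F m)^2 := by
      intro m
      have hc : ((2*k*(m+1)-1)+1) % (2*k) = 0 := by
        rw [hn1 m]
        exact Nat.mul_mod_right _ _
      have := key_eq hk h (hnm1 m) hc
      rwa [hn2 m] at this
    have hFpos : ∀ m, 0 < F m := fun m => xiR_pos hk h _
    have hFle : ∀ m : ℕ, F m ≤ 1/((m:ℝ)+1) := by
      intro m
      have h1 := xiR_le hk h (hnm1 m)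
      have h2 : ((m:ℝ)+1) ≤ ((2*k*(m+1) - 1 : ℕ) : ℝ) := by
        have : m+1 ≤ 2*k*(m+1) - 1 := by
          have h4 : 2*(m+1) ≤ 2*k*(m+1) := by
            calc 2*(m+1) = 2*1*(m+1) := by ring
            _ ≤ 2*k*(m+1) := Nat.mul_le_mul (by omega) (le_refl _)
          omega
        exact_mod_cast this
      calc F m ≤ 1/((2*k*(m+1) - 1 : ℕ) : ℝ) := h1
        _ ≤ 1/((m:ℝ)+1) := by
          apply one_div_le_one_div_of_le (by positivity) h2
    have hF0 : Filter.Tendsto F Filter.atTop (nhds 0) := by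
      apply squeeze_zero (fun m => (hFpos m).le) hFle
      exact tendsto_one_div_add_atTop_nhds_zero_nat
    have hnum : Filter.Tendsto (fun m => Dk αk + (1 - Dk αk) * (F m)^2)
        Filter.atTop (nhds (Dk αk)) := by
      have hsq : Filter.Tendsto (fun m => (F m)^2) Filter.atTop (nhds 0) := by
        have := hF0.mul hF0
        norm_num at this
        have heq : ∀ m, F m * F m = (F m)^2 := fun m => by ring
        exact Filter.Tendsto.congr heq this
      have := Filter.Tendsto.add (tendsto_const_nhds (x := Dk αk))
        ((tendsto_const_nhds (x := 1 - Dk αk)).mul hsq)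
      norm_num at this
      exact this
    have hQtend : Filter.Tendsto (fun m => (((Qd k (2*k*(m+1)+1)).toNat : ℕ) : ℝ))
        Filter.atTop Filter.atTop := by
      apply Filter.tendsto_atTop_mono (f := fun m : ℕ => (m:ℝ))
      · intro m
        rw [hQcast m]
        have h5 : (m : ℤ) ≤ Qd k (2*k*(m+1)+1) := by
          have h6 : (m : ℤ) ≤ ((2*k*(m+1) : ℕ) : ℤ) := by
            have : m ≤ 2*k*(m+1) := le_trans (by omega)
              (Nat.mul_le_mul (show 1 ≤ 2*k by omega) (le_refl (m+1)))
            exact_mod_cast this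
          linarith [hQge m]
        exact_mod_cast h5
      · exact tendsto_natCast_atTop_atTop
    have hgtend : Filter.Tendsto (fun m => gFun αk (((Qd k (2*k*(m+1)+1)).toNat : ℕ) : ℝ))
        Filter.atTop (nhds (Dk αk)) := (gFun_tendsto hk h).comp hQtend
    have hfinal := Filter.Tendsto.div hnum hgtend (ne_of_gt hDpos)
    rw [div_self (ne_of_gt hDpos)] at hfinal
    apply Filter.Tendsto.congr _ hfinal
    intro m
    show (Dk αk + (1 - Dk αk) * (F m)^2) / gFun αk (((Qd k (2*k*(m+1)+1)).toNat : ℕ) : ℝ)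
        = ((Qd k (2*k*(m+1)+1)).toNat : ℝ) * psi αk⁻¹ (((Qd k (2*k*(m+1)+1)).toNat : ℝ) - 1)
          / gFun αk (((Qd k (2*k*(m+1)+1)).toNat : ℕ) : ℝ)
    rw [hQcast m, hψ m, ← hkey m]

end Main
end Stmt6
/-- Remark 1 to Proposition 1. Let `k ≥ 1` and
`α = 1/α_k = [0; overline{1_{2k−1}, 2}]`. Then (a) `t·ψ_α(t) < g_k(t)` for all sufficiently
large `t`, and (b) there is a strictly increasing sequence of integers `Q n ≥ 2` with
`Q n · ψ_α(Q n − 1)/g_k(Q n) → 1`. -/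
theorem dirichlet_discrete_stmt6 (k : ℕ) (hk : 1 ≤ k) (αk : ℝ)
    (hαk : IsCFExp (aSeq k) αk) :
    (∀ᶠ t : ℝ in atTop, t * psi αk⁻¹ t < gFun αk t) ∧
    ∃ Q : ℕ → ℕ, StrictMono Q ∧ (∀ n, 2 ≤ Q n) ∧
      Tendsto (fun n => (Q n : ℝ) * psi αk⁻¹ ((Q n : ℝ) - 1) / gFun αk (Q n))
        atTop (nhds 1) := by
  exact ⟨Stmt6.part_a hk hαk, Stmt6.part_b hk hαk⟩
end

section
/- Fix k ≥ 1. For all sufficiently large m the following holds: if k is odd, then W_m(s) ≤ W_m(k) for every odd s with 1 ≤ s ≤ 2k; if k is even, then W_m(s) ≤ max(W_m(k−1), W_m(k+1)) for every odd s with 1 ≤ s ≤ 2k. -/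
open Filter Real

section Aux
-- ===== cfVal basics =====
lemma cfVal_cons (a : ℤ) (l : List ℤ) (h : l ≠ []) :
    cfVal (a :: l) = (a : ℝ) + 1 / cfVal l := by
  match l with
  | [] => exact absurd rfl h
  | b :: l => rfl

lemma one_le_cfVal : ∀ l : List ℤ, l ≠ [] → (∀ x ∈ l, 1 ≤ x) → (1 : ℝ) ≤ cfVal l := by
  intro l
  induction l with
  | nil => intro h; exact absurd rfl h
  | cons a l ih =>
    intro _ hx
    have ha : (1:ℤ) ≤ a := hx a List.mem_cons_self
    match l with
    | [] => simpa [cfVal] using by exact_mod_cast ha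
    | b :: l' =>
      have h1 : (1:ℝ) ≤ cfVal (b :: l') := ih (by simp) (fun x hx' => hx x (List.mem_cons_of_mem _ hx'))
      have h2 : (0:ℝ) < 1 / cfVal (b :: l') := by positivity
      have h3 : cfVal (a :: b :: l') = (a:ℝ) + 1 / cfVal (b :: l') := rfl
      rw [h3]
      have : (1:ℝ) ≤ (a:ℝ) := by exact_mod_cast ha
      linarith

-- ===== Pf / uu / Qf algebra =====
noncomputable def Pf : ℕ → ℝ → ℝ
  | 0, _ => 1
  | 1, t => t
  | (j+2), t => Pf (j+1) t + Pf j t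

noncomputable def uu : ℕ → ℝ → ℝ
  | 0, t => t
  | (j+1), t => 1 + 1 / uu j t

noncomputable def Qf (j : ℕ) (t : ℝ) : ℝ :=
  Pf (j+1) t ^ 2 - Pf (j+1) t * Pf j t - Pf j t ^ 2

lemma Pf_pos {t : ℝ} (ht : 0 < t) : ∀ j, 0 < Pf j t := by
  intro j
  induction j using Nat.strong_induction_on with
  | _ j ih =>
    match j with
    | 0 => exact one_pos
    | 1 => exact ht
    | (j+2) =>
      have h1 := ih (j+1) (by omega)
      have h2 := ih j (by omega)
      show 0 < Pf (j+1) t + Pf j t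
      linarith

lemma Pf_lt_succ {t : ℝ} (ht : 1 < t) : ∀ j, Pf j t < Pf (j+1) t := by
  intro j
  match j with
  | 0 => exact ht
  | (j+1) =>
    have := Pf_pos (by linarith : (0:ℝ) < t) j
    show Pf (j+1) t < Pf (j+1) t + Pf j t
    linarith

lemma Pf_strictMono {t : ℝ} (ht : 1 < t) : StrictMono (fun j => Pf j t) :=
  strictMono_nat_of_lt_succ (Pf_lt_succ ht)

lemma uu_eq {t : ℝ} (ht : 0 < t) : ∀ j, uu j t = Pf (j+1) t / Pf j t := by
  intro j
  induction j with
  | zero => simp [uu, Pf]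
  | succ j ih =>
    have hp := Pf_pos ht j
    have hp1 := Pf_pos ht (j+1)
    show 1 + 1 / uu j t = Pf (j+2) t / Pf (j+1) t
    rw [ih]
    show 1 + 1 / (Pf (j+1) t / Pf j t) = (Pf (j+1) t + Pf j t) / Pf (j+1) t
    field_simp

lemma uu_pos {t : ℝ} (ht : 0 < t) (j : ℕ) : 0 < uu j t := by
  rw [uu_eq ht]; exact div_pos (Pf_pos ht _) (Pf_pos ht _)

lemma Qf_succ (j : ℕ) (t : ℝ) : Qf (j+1) t = - Qf j t := by
  show Pf (j+2) t ^ 2 - Pf (j+2) t * Pf (j+1) t - Pf (j+1) t ^2 = _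
  have h : Pf (j+2) t = Pf (j+1) t + Pf j t := rfl
  rw [h]; unfold Qf; ring

lemma Qf_even (i : ℕ) (t : ℝ) : Qf (2*i) t = t^2 - t - 1 := by
  induction i with
  | zero => show Pf 1 t ^2 - Pf 1 t * Pf 0 t - Pf 0 t ^2 = _; simp [Pf]
  | succ i ih =>
    have h1 : 2*(i+1) = (2*i+1)+1 := by ring
    rw [h1, Qf_succ, Qf_succ, ih]; ring

lemma Qf_odd (i : ℕ) (t : ℝ) : Qf (2*i+1) t = -(t^2 - t - 1) := by
  rw [Qf_succ, Qf_even]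

lemma uu_sub {t : ℝ} (ht : 0 < t) (j : ℕ) :
    uu j t - uu (j+2) t = Qf j t / (Pf j t * Pf (j+2) t) := by
  have h0 := Pf_pos ht j
  have h2 := Pf_pos ht (j+2)
  rw [uu_eq ht, uu_eq ht]
  have e3 : Pf (j+3) t = Pf (j+2) t + Pf (j+1) t := rfl
  have e2 : Pf (j+2) t = Pf (j+1) t + Pf j t := rfl
  rw [Qf]
  field_simp
  rw [e3, e2]
  ring

lemma inv_uu_sub {t : ℝ} (ht : 0 < t) (j : ℕ) :
    1 / uu (j+2) t - 1 / uu j t = Qf j t / (Pf (j+1) t * Pf (j+3) t) := by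
  have h1 := Pf_pos ht (j+1)
  have h3 := Pf_pos ht (j+3)
  have h0 := Pf_pos ht j
  have h2 := Pf_pos ht (j+2)
  rw [uu_eq ht, uu_eq ht, one_div_div, one_div_div, Qf]
  have e3 : Pf (j+3) t = Pf (j+2) t + Pf (j+1) t := rfl
  have e2 : Pf (j+2) t = Pf (j+1) t + Pf j t := rfl
  field_simp
  rw [e3, e2]
  ring

lemma Pf_continuous (j : ℕ) : Continuous (fun t : ℝ => Pf j t) := by
  induction j using Nat.strong_induction_on with
  | _ j ih =>
    match j with
    | 0 => simpa [Pf] using continuous_const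
    | 1 => simpa [Pf] using continuous_id'
    | (j+2) =>
      have h1 := ih (j+1) (by omega)
      have h2 := ih j (by omega)
      show Continuous fun t => Pf (j+1) t + Pf j t
      exact h1.add h2

-- ===== sequence identities =====
lemma one_le_wSeq (k s n : ℕ) : 1 ≤ wSeq k s n := by
  unfold wSeq; split_ifs <;> norm_num

lemma wSeq_zero (k s : ℕ) : wSeq k s 0 = 1 := by simp [wSeq]

lemma wSeq_eq_one_of_lt {k s n : ℕ} (h : n < 2*k - s) : wSeq k s n = 1 := by
  unfold wSeq
  by_cases h0 : n = 0
  · rw [if_pos h0]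
  · rw [if_neg h0, if_pos h]

lemma wSeq_eq_two {k s n : ℕ} (h0 : n ≠ 0) (h1 : ¬ n < 2*k - s)
    (h2 : (n - (2*k - s)) % (2*k) = 0) : wSeq k s n = 2 := by
  unfold wSeq; rw [if_neg h0, if_neg h1, if_pos h2]

lemma wSeq_eq_one {k s n : ℕ} (h1 : ¬ n < 2*k - s)
    (h2 : ¬ (n - (2*k - s)) % (2*k) = 0) : wSeq k s n = 1 := by
  unfold wSeq
  by_cases h0 : n = 0
  · rw [if_pos h0]
  · rw [if_neg h0, if_neg h1, if_neg h2]

lemma cfList_ne_nil (a : ℕ → ℤ) (n : ℕ) : cfList a n ≠ [] := by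
  simp [cfList, List.range_succ]

lemma cfList_congr {a b : ℕ → ℤ} (n : ℕ) (h : ∀ i, i ≤ n → a i = b i) :
    cfList a n = cfList b n := by
  unfold cfList
  apply List.map_congr_left
  intro i hi
  exact h i (by simpa using Nat.lt_succ_iff.mp (List.mem_range.mp hi))

lemma cfList_succ (a : ℕ → ℤ) (n : ℕ) :
    cfList a (n+1) = a 0 :: cfList (fun i => a (i+1)) n := by
  unfold cfList
  rw [List.range_succ_eq_map]
  simp [Function.comp]

lemma wSeq_shift {k s : ℕ} (hs : 1 ≤ s) (hs2 : s ≤ 2*k - 2) (n : ℕ) :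
    wSeq k s (n+1) = wSeq k (s+1) n := by
  by_cases h0 : n = 0
  · subst h0
    rw [wSeq_zero, wSeq_eq_one_of_lt (by omega)]
  by_cases hlt : n < 2*k - (s+1)
  · rw [wSeq_eq_one_of_lt (show n+1 < 2*k - s by omega),
      wSeq_eq_one_of_lt hlt]
  have harg : n + 1 - (2*k - s) = n - (2*k - (s+1)) := by omega
  by_cases hmod : (n - (2*k - (s+1))) % (2*k) = 0
  · rw [wSeq_eq_two (by omega) (by omega) (by rw [harg]; exact hmod),
      wSeq_eq_two h0 hlt hmod]
  · rw [wSeq_eq_one (by omega) (by rw [harg]; exact hmod),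
      wSeq_eq_one hlt hmod]

lemma wSeq_top1 {k : ℕ} (hk : 1 ≤ k) : wSeq k (2*k-1) 1 = 2 := by
  apply wSeq_eq_two (by omega) (by omega)
  have h : 1 - (2*k - (2*k-1)) = 0 := by omega
  rw [h, Nat.zero_mod]

lemma mod_ne_zero_of_lt {a b : ℕ} (h0 : 0 < a) (h : a < b) : a % b ≠ 0 := by
  rw [Nat.mod_eq_of_lt h]; omega

lemma wSeq_top_shift {k : ℕ} (hk : 1 ≤ k) (n : ℕ) :
    wSeq k (2*k-1) (n+2) = wSeq k 1 n := by
  have harg : n + 2 - (2*k - (2*k-1)) = n + 1 := by omega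
  by_cases hlt : n < 2*k - 1
  · have hmod : (n+1) % (2*k) ≠ 0 := mod_ne_zero_of_lt (by omega) (by omega)
    rw [wSeq_eq_one (by omega) (by rw [harg]; exact hmod),
      wSeq_eq_one_of_lt (by omega)]
  · have hper : (n+1) % (2*k) = (n - (2*k-1)) % (2*k) := by
      have h2 : n - (2*k - 1) + 2*k = n + 1 := by omega
      rw [← h2, Nat.add_mod_right]
    by_cases hmod : (n - (2*k - 1)) % (2*k) = 0
    · rw [wSeq_eq_two (by omega) (by omega) (by rw [harg, hper]; exact hmod),
        wSeq_eq_two (by omega) (by omega) hmod]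
    · rw [wSeq_eq_one (by omega) (by rw [harg, hper]; exact hmod),
        wSeq_eq_one (by omega) hmod]

lemma wSeq_one_period {k : ℕ} (hk : 1 ≤ k) (n : ℕ) :
    wSeq k 1 (2*k + n) = wSeq k 1 n := by
  have harg : 2*k + n - (2*k - 1) = n + 1 := by omega
  by_cases hlt : n < 2*k - 1
  · have hmod : (n+1) % (2*k) ≠ 0 := mod_ne_zero_of_lt (by omega) (by omega)
    rw [wSeq_eq_one (by omega) (by rw [harg]; exact hmod),
      wSeq_eq_one_of_lt (by omega)]
  · have hper : (n+1) % (2*k) = (n - (2*k-1)) % (2*k) := by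
      have h2 : n - (2*k - 1) + 2*k = n + 1 := by omega
      rw [← h2, Nat.add_mod_right]
    by_cases hmod : (n - (2*k - 1)) % (2*k) = 0
    · rw [wSeq_eq_two (by omega) (by omega) (by rw [harg, hper]; exact hmod),
        wSeq_eq_two (by omega) (by omega) hmod]
    · rw [wSeq_eq_one (by omega) (by rw [harg, hper]; exact hmod),
        wSeq_eq_one (by omega) hmod]

lemma block_eq_map {k : ℕ} (hk : 1 ≤ k) :
    (List.range (2*k)).map (wSeq k 1) = block k := by
  have h : 2*k = (2*k - 1) + 1 := by omega
  rw [h, List.range_succ, List.map_append]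
  unfold block
  congr 1
  · rw [List.eq_replicate_iff]
    constructor
    · simp
    · intro x hx
      rcases List.mem_map.mp hx with ⟨i, hi, rfl⟩
      exact wSeq_eq_one_of_lt (by have := List.mem_range.mp hi; omega)
  · simp only [List.map_cons, List.map_nil]
    congr 1
    apply wSeq_eq_two (by omega) (by omega)
    have h2 : 2*k - 1 - (2*k - 1) = 0 := by omega
    rw [h2, Nat.zero_mod]

lemma blocks_eq_map {k : ℕ} (hk : 1 ≤ k) (m : ℕ) :
    blocks k m = (List.range (2*k*m)).map (wSeq k 1) := by
  induction m with
  | zero => simp [blocks]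
  | succ m ih =>
    have h : 2*k*(m+1) = 2*k + 2*k*m := by ring
    rw [h, List.range_add, List.map_append]
    show block k ++ blocks k m = _
    congr 1
    · exact (block_eq_map hk).symm
    · rw [ih, List.map_map]
      apply List.map_congr_left
      intro i _
      exact (wSeq_one_period hk i).symm

lemma one_le_blocks {k : ℕ} (m : ℕ) : ∀ x ∈ blocks k m, (1:ℤ) ≤ x := by
  induction m with
  | zero => simp [blocks]
  | succ m ih =>
    intro x hx
    rcases List.mem_append.mp hx with h | h
    · unfold block at h
      rcases List.mem_append.mp h with h' | h'
      · have := List.eq_of_mem_replicate h'; omega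
      · simp at h'; omega
    · exact ih x h

lemma blocks_ne_nil {k m : ℕ} (hm : 1 ≤ m) : blocks k m ≠ [] := by
  match m with
  | (m+1) =>
    show block k ++ blocks k m ≠ []
    simp [block]

-- ===== chain lemmas =====
lemma chainUp (W : ℕ → ℝ) (c : ℕ) (hc : Odd c)
    (H : ∀ s, Odd s → s + 2 ≤ c → W s < W (s+2)) :
    ∀ s, Odd s → s ≤ c → W s ≤ W c := by
  have key : ∀ n s, Odd s → s + 2*n = c → W s ≤ W c := by
    intro n
    induction n with
    | zero => intro s _ h; rw [show s = c by omega]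
    | succ n ih =>
      intro s hs h
      have h2 : s + 2 ≤ c := by omega
      have hlt := H s hs h2
      rcases hs with ⟨i, hi⟩
      have := ih (s+2) ⟨i+1, by omega⟩ (by omega)
      linarith
  intro s hs hsc
  rcases hs with ⟨i, hi⟩; rcases hc with ⟨j, hj⟩
  exact key (j - i) s ⟨i, hi⟩ (by omega)

lemma chainDown (W : ℕ → ℝ) (c top : ℕ) (hc : Odd c)
    (H : ∀ s, Odd s → c ≤ s → s + 2 ≤ top → W (s+2) < W s) :
    ∀ s, Odd s → c ≤ s → s ≤ top → W s ≤ W c := by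
  have key : ∀ n s, s = c + 2*n → s ≤ top → W s ≤ W c := by
    intro n
    induction n with
    | zero => intro s h _; rw [show s = c by omega]
    | succ n ih =>
      intro s h htop
      rcases hc with ⟨j, hj⟩
      have hlt := H (c+2*n) ⟨j+n, by omega⟩ (by omega) (by omega)
      have := ih (c+2*n) rfl (by omega)
      rw [show s = c+2*n+2 by omega]
      linarith
  intro s hs hcs htop
  rcases hs with ⟨i, hi⟩; rcases hc with ⟨j, hj⟩
  exact key (i - j) s (by omega) htop

lemma uu_succ (j : ℕ) (t : ℝ) : uu (j+1) t = 1 + 1/uu j t := rfl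
lemma uu_zero (t : ℝ) : uu 0 t = t := rfl

lemma cfList_succ2 (a : ℕ → ℤ) (n : ℕ) :
    cfList a (n+2) = a 0 :: a 1 :: cfList (fun i => a (i+2)) n := by
  rw [cfList_succ, cfList_succ]

end Aux

/-- Lemma 5, odd `s`. Fix `k ≥ 1` and let
`W_m(s) = [0; 1_{s−1}, 2, (1_{2k−1}, 2)^m] + [1; 1_{2k−s−1}, overline{2, 1_{2k−1}}]`,
where `w s` denotes the second (infinite) summand. For all sufficiently large `m`:
if `k` is odd then `W_m(s) ≤ W_m(k)` for every odd `1 ≤ s ≤ 2k`; if `k` is even then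
`W_m(s) ≤ max (W_m(k−1)) (W_m(k+1))` for every odd `1 ≤ s ≤ 2k`. -/

theorem dirichlet_discrete_stmt11 (k : ℕ) (hk : 1 ≤ k) (w : ℕ → ℝ)
    (hw : ∀ s, 1 ≤ s → s ≤ 2 * k - 1 → IsCFExp (wSeq k s) (w s)) :
    ∀ᶠ m : ℕ in atTop, ∀ s, 1 ≤ s → s ≤ 2 * k → Odd s →
      (Odd k → cfVal (wFin k m s) + w s ≤ cfVal (wFin k m k) + w k) ∧
      (Even k → cfVal (wFin k m s) + w s ≤
        max (cfVal (wFin k m (k - 1)) + w (k - 1))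
            (cfVal (wFin k m (k + 1)) + w (k + 1))) := by
  -- convergents are ≥ 1
  have hconv_ge : ∀ s n, (1:ℝ) ≤ cfVal (cfList (wSeq k s) n) := by
    intro s n
    apply one_le_cfVal _ (cfList_ne_nil _ _)
    intro x hx
    rcases List.mem_map.mp hx with ⟨i, _, rfl⟩
    exact one_le_wSeq k s i
  have hwge : ∀ s, 1 ≤ s → s ≤ 2*k - 1 → 1 ≤ w s := by
    intro s h1 h2
    have hcs : Tendsto (fun n => cfVal (cfList (wSeq k s) n)) atTop (nhds (w s)) := hw s h1 h2
    exact ge_of_tendsto' hcs (fun n => hconv_ge s n)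
  have hα : Tendsto (fun n => cfVal (cfList (wSeq k 1) n)) atTop (nhds (w 1)) :=
    hw 1 le_rfl (by omega)
  have hw1 : 1 ≤ w 1 := hwge 1 le_rfl (by omega)
  have hw1ne : w 1 ≠ 0 := by linarith
  set γ : ℝ := 2 + 1/(w 1) with hγdef
  have hγ2 : 2 < γ := by
    have : 0 < 1/(w 1) := by positivity
    rw [hγdef]; linarith
  have hγ0 : (0:ℝ) < γ := by linarith
  have hγ1 : (1:ℝ) < γ := by linarith
  have hAγ : 0 < γ^2 - γ - 1 := by nlinarith
  -- recurrence for w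
  have hwrec : ∀ s, 1 ≤ s → s + 1 ≤ 2*k - 1 → w s = 1 + 1/(w (s+1)) := by
    intro s h1 h2
    have hcs : Tendsto (fun n => cfVal (cfList (wSeq k s) n)) atTop (nhds (w s)) :=
      hw s h1 (by omega)
    have hcs1 : Tendsto (fun n => cfVal (cfList (wSeq k (s+1)) n)) atTop (nhds (w (s+1))) :=
      hw (s+1) (by omega) h2
    have heq : ∀ n, cfVal (cfList (wSeq k s) (n+1))
        = 1 + 1/(cfVal (cfList (wSeq k (s+1)) n)) := by
      intro n
      rw [cfList_succ]
      have hcg : cfList (fun i => wSeq k s (i+1)) n = cfList (wSeq k (s+1)) n :=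
        cfList_congr n (fun i _ => wSeq_shift h1 (by omega) i)
      rw [hcg, cfVal_cons _ _ (cfList_ne_nil _ _), wSeq_zero]
      norm_num
    have hA' : Tendsto (fun n => cfVal (cfList (wSeq k s) (n+1))) atTop (nhds (w s)) :=
      hcs.comp (tendsto_add_atTop_nat 1)
    have hne : w (s+1) ≠ 0 := by have := hwge (s+1) (by omega) h2; linarith
    have hB : Tendsto (fun n => 1 + 1/(cfVal (cfList (wSeq k (s+1)) n))) atTop
        (nhds (1 + 1/(w (s+1)))) :=
      (tendsto_const_nhds.div hcs1 hne).const_add 1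
    exact tendsto_nhds_unique (hA'.congr heq) hB
  -- base value
  have hwtop : w (2*k-1) = 1 + 1/γ := by
    have hcs : Tendsto (fun n => cfVal (cfList (wSeq k (2*k-1)) n)) atTop (nhds (w (2*k-1))) :=
      hw (2*k-1) (by omega) (by omega)
    have heq : ∀ n, cfVal (cfList (wSeq k (2*k-1)) (n+2))
        = 1 + 1/(2 + 1/(cfVal (cfList (wSeq k 1) n))) := by
      intro n
      have hcg2 : cfList (fun i => wSeq k (2*k-1) (i+2)) n = cfList (wSeq k 1) n :=
        cfList_congr n (fun i _ => wSeq_top_shift hk i)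
      have e : cfList (wSeq k (2*k-1)) (n+2) = 1 :: 2 :: cfList (wSeq k 1) n := by
        rw [cfList_succ2, wSeq_zero, wSeq_top1 hk, hcg2]
      rw [e, cfVal_cons _ _ (by simp), cfVal_cons _ _ (cfList_ne_nil _ _)]
      norm_num
    have hA' : Tendsto (fun n => cfVal (cfList (wSeq k (2*k-1)) (n+2))) atTop
        (nhds (w (2*k-1))) := hcs.comp (tendsto_add_atTop_nat 2)
    have hin : Tendsto (fun n => 2 + 1/(cfVal (cfList (wSeq k 1) n))) atTop (nhds γ) := by
      rw [hγdef]
      exact (tendsto_const_nhds.div hα hw1ne).const_add 2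
    have hγne : γ ≠ 0 := by linarith
    have hB : Tendsto (fun n => 1 + 1/(2 + 1/(cfVal (cfList (wSeq k 1) n)))) atTop
        (nhds (1 + 1/γ)) :=
      (tendsto_const_nhds.div hin hγne).const_add 1
    exact tendsto_nhds_unique (hA'.congr heq) hB
  -- closed form for w
  have hwval : ∀ i, i ≤ 2*k - 2 → w (2*k-1-i) = uu (i+1) γ := by
    intro i
    induction i with
    | zero =>
      intro _
      have h1 : uu 1 γ = 1 + 1/γ := by simp [uu]
      simpa [h1] using hwtop
    | succ i ih =>
      intro hi
      have hs1 : 1 ≤ 2*k-1-(i+1) := by omega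
      have hrec := hwrec (2*k-1-(i+1)) hs1 (by omega)
      rw [show 2*k-1-(i+1)+1 = 2*k-1-i by omega] at hrec
      rw [hrec, ih (by omega)]
      conv_rhs => rw [uu_succ]
  have hwval' : ∀ s, 1 ≤ s → s ≤ 2*k-1 → w s = uu (2*k-s) γ := by
    intro s h1 h2
    have h := hwval (2*k-1-s) (by omega)
    rw [show 2*k-1-(2*k-1-s) = s by omega, show 2*k-1-s+1 = 2*k-s by omega] at h
    exact h
  -- z sequence
  set z : ℕ → ℝ := fun m => 2 + 1/(cfVal (blocks k m)) with hzdef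
  have hblocks_ge : ∀ m, 1 ≤ m → (1:ℝ) ≤ cfVal (blocks k m) := by
    intro m hm
    exact one_le_cfVal _ (blocks_ne_nil hm) (one_le_blocks m)
  have hz2 : ∀ m, 1 ≤ m → 2 < z m := by
    intro m hm
    have h1 := hblocks_ge m hm
    have h2 : 0 < 1/(cfVal (blocks k m)) := by positivity
    have hzm : z m = 2 + 1/(cfVal (blocks k m)) := rfl
    rw [hzm]; linarith
  have hmono : Tendsto (fun m : ℕ => 2*k*m - 1) atTop atTop := by
    apply tendsto_atTop_mono' atTop ((eventually_ge_atTop 1).mono ?_) tendsto_id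
    intro m hm
    have h1 : 2*m ≤ 2*k*m := Nat.mul_le_mul_right m (by omega : 2 ≤ 2*k)
    simp only [id]
    omega
  have hbeq : ∀ᶠ m : ℕ in atTop,
      cfVal (cfList (wSeq k 1) (2*k*m-1)) = cfVal (blocks k m) := by
    filter_upwards [eventually_ge_atTop 1] with m hm
    rw [blocks_eq_map hk m]
    have h1 : 1 ≤ 2*k*m := Nat.one_le_iff_ne_zero.mpr
      (Nat.mul_ne_zero (Nat.mul_ne_zero two_ne_zero (by omega)) (by omega))
    unfold cfList
    rw [Nat.sub_add_cancel h1]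
  have hb : Tendsto (fun m => cfVal (blocks k m)) atTop (nhds (w 1)) :=
    (hα.comp hmono).congr' hbeq
  have hzlim : Tendsto z atTop (nhds γ) := by
    rw [hzdef, hγdef]
    exact (tendsto_const_nhds.div hb hw1ne).const_add 2
  -- closed form for finite part
  have hL : ∀ m, 1 ≤ m → ∀ s, 1 ≤ s →
      cfVal (List.replicate (s-1) 1 ++ [2] ++ blocks k m) = uu (s-1) (z m) := by
    intro m hm s hs
    induction s, hs using Nat.le_induction with
    | base =>
      simp only [Nat.sub_self, List.replicate_zero, List.nil_append]
      rw [List.singleton_append, cfVal_cons _ _ (blocks_ne_nil hm)]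
      have hzm : z m = 2 + 1/(cfVal (blocks k m)) := rfl
      rw [hzm]
      norm_num [uu_zero]
    | succ s hs ih =>
      simp only [Nat.add_sub_cancel]
      obtain ⟨j, rfl⟩ : ∃ j, s = j + 1 := ⟨s-1, by omega⟩
      simp only [Nat.add_sub_cancel] at ih
      rw [List.replicate_succ]
      simp only [List.cons_append]
      rw [cfVal_cons _ _ (by simp), ih, uu_succ]
      norm_num
  have hv : ∀ m, 1 ≤ m → ∀ s, 1 ≤ s →
      cfVal (wFin k m s) = 1/(uu (s-1) (z m)) := by
    intro m hm s hs
    unfold wFin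
    rw [cfVal_cons _ _ (by simp), hL m hm s hs]
    norm_num
  -- per-step eventual inequalities
  have main : ∀ s, Odd s → s + 2 ≤ 2*k-1 →
      ((s + 2 ≤ k → ∀ᶠ m : ℕ in atTop,
          cfVal (wFin k m s) + w s < cfVal (wFin k m (s+2)) + w (s+2)) ∧
       (k ≤ s → ∀ᶠ m : ℕ in atTop,
          cfVal (wFin k m (s+2)) + w (s+2) < cfVal (wFin k m s) + w s)) := by
    intro s hsodd hs2k
    obtain ⟨i, hi⟩ := hsodd
    have hs1 : 1 ≤ s := by omega
    set r : ℕ := 2*k - s - 2 with hr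
    have hi0 : ∃ i0, r = 2*i0 + 1 := ⟨k - i - 2, by omega⟩
    obtain ⟨i0, hi0⟩ := hi0
    have hPr := Pf_pos hγ0 r
    have hPr2 := Pf_pos hγ0 (r+2)
    have hC2 : 0 < Pf r γ * Pf (r+2) γ := mul_pos hPr hPr2
    set C : ℝ := (γ^2 - γ - 1)/(Pf r γ * Pf (r+2) γ) with hC
    have hkey : ∀ m, 1 ≤ m →
        (cfVal (wFin k m (s+2)) + w (s+2)) - (cfVal (wFin k m s) + w s)
          = (z m^2 - z m - 1)/(Pf s (z m) * Pf (s+2) (z m)) - C := by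
      intro m hm
      have hzm : (0:ℝ) < z m := by have := hz2 m hm; linarith
      have hv1 := hv m hm s hs1
      have hv2 := hv m hm (s+2) (by omega)
      have hwa := hwval' s hs1 (by omega)
      have hwb := hwval' (s+2) (by omega) (by omega)
      rw [show 2*k-s = r+2 by omega] at hwa
      rw [show 2*k-(s+2) = r by omega] at hwb
      obtain ⟨j, rfl⟩ : ∃ j, s = j + 1 := ⟨s-1, by omega⟩
      simp only [Nat.add_sub_cancel] at hv1
      rw [show j+1+2-1 = j+2 by omega] at hv2
      have e1 := inv_uu_sub hzm j
      have eQ : Qf j (z m) = z m^2 - z m - 1 := by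
        rw [show j = 2*i by omega]
        exact Qf_even i (z m)
      rw [eQ] at e1
      have e2 := uu_sub hγ0 r
      have eQr : Qf r γ = -(γ^2 - γ - 1) := by
        rw [hi0]; exact Qf_odd i0 γ
      rw [eQr, neg_div] at e2
      rw [hv1, hv2, hwa, hwb]
      have e1' : 1/(uu (j+2) (z m)) - 1/(uu j (z m))
          = (z m^2 - z m - 1) / (Pf (j+1) (z m) * Pf (j+1+2) (z m)) := e1
      linarith [e1', e2, hC]
    have hPcont : Tendsto (fun m => (z m^2 - z m - 1)/(Pf s (z m) * Pf (s+2) (z m)) - C)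
        atTop (nhds ((γ^2 - γ - 1)/(Pf s γ * Pf (s+2) γ) - C)) := by
      have hc1 : Continuous (fun t : ℝ => t^2 - t - 1) :=
        ((continuous_pow 2).sub continuous_id).sub continuous_const
      have hc2 : Continuous (fun t : ℝ => Pf s t * Pf (s+2) t) :=
        (Pf_continuous s).mul (Pf_continuous (s+2))
      have hden : Pf s γ * Pf (s+2) γ ≠ 0 :=
        ne_of_gt (mul_pos (Pf_pos hγ0 s) (Pf_pos hγ0 (s+2)))
      have h1 : Tendsto (fun m => z m^2 - z m - 1) atTop (nhds (γ^2 - γ - 1)) := by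
        have := (hc1.tendsto γ).comp hzlim
        exact this
      have h2 : Tendsto (fun m => Pf s (z m) * Pf (s+2) (z m)) atTop
          (nhds (Pf s γ * Pf (s+2) γ)) := by
        have := (hc2.tendsto γ).comp hzlim
        exact this
      exact (h1.div h2 hden).sub_const C
    have hBpos : 0 < Pf s γ * Pf (s+2) γ :=
      mul_pos (Pf_pos hγ0 s) (Pf_pos hγ0 (s+2))
    constructor
    · intro hsk
      have hPlt : Pf s γ * Pf (s+2) γ < Pf r γ * Pf (r+2) γ := by
        apply mul_lt_mul'' (Pf_strictMono hγ1 (show s < r by omega))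
          (Pf_strictMono hγ1 (show s+2 < r+2 by omega))
          (le_of_lt (Pf_pos hγ0 s)) (le_of_lt (Pf_pos hγ0 (s+2)))
      have hpos : 0 < (γ^2 - γ - 1)/(Pf s γ * Pf (s+2) γ) - C := by
        rw [sub_pos, hC, div_lt_div_iff₀ hC2 hBpos]
        exact mul_lt_mul_of_pos_left hPlt hAγ
      have hev : ∀ᶠ m : ℕ in atTop,
          0 < (z m^2 - z m - 1)/(Pf s (z m) * Pf (s+2) (z m)) - C :=
        hPcont.eventually (eventually_gt_nhds hpos)
      filter_upwards [hev, eventually_ge_atTop 1] with m h1 h2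
      have := hkey m h2
      linarith
    · intro hks
      have hPlt : Pf r γ * Pf (r+2) γ < Pf s γ * Pf (s+2) γ := by
        apply mul_lt_mul'' (Pf_strictMono hγ1 (show r < s by omega))
          (Pf_strictMono hγ1 (show r+2 < s+2 by omega))
          (le_of_lt (Pf_pos hγ0 r)) (le_of_lt (Pf_pos hγ0 (r+2)))
      have hneg : (γ^2 - γ - 1)/(Pf s γ * Pf (s+2) γ) - C < 0 := by
        rw [sub_neg, hC, div_lt_div_iff₀ hBpos hC2]
        exact mul_lt_mul_of_pos_left hPlt hAγ
      have hev : ∀ᶠ m : ℕ in atTop,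
          (z m^2 - z m - 1)/(Pf s (z m) * Pf (s+2) (z m)) - C < 0 :=
        hPcont.eventually (eventually_lt_nhds hneg)
      filter_upwards [hev, eventually_ge_atTop 1] with m h1 h2
      have := hkey m h2
      linarith
  -- combine over all s
  have hP : ∀ s : ℕ, ∀ᶠ m : ℕ in atTop, Odd s →
      ((s+2 ≤ k → cfVal (wFin k m s) + w s < cfVal (wFin k m (s+2)) + w (s+2)) ∧
       (k ≤ s → s+2 ≤ 2*k-1 →
          cfVal (wFin k m (s+2)) + w (s+2) < cfVal (wFin k m s) + w s)) := by
    intro s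
    by_cases hso : Odd s
    · by_cases ha : s + 2 ≤ 2*k-1
      · have hm := main s hso ha
        have E1 : ∀ᶠ m : ℕ in atTop, s+2 ≤ k →
            cfVal (wFin k m s) + w s < cfVal (wFin k m (s+2)) + w (s+2) := by
          by_cases hsk : s+2 ≤ k
          · exact (hm.1 hsk).mono (fun m h _ => h)
          · exact Eventually.of_forall (fun m h => absurd h hsk)
        have E2 : ∀ᶠ m : ℕ in atTop, k ≤ s → s+2 ≤ 2*k-1 →
            cfVal (wFin k m (s+2)) + w (s+2) < cfVal (wFin k m s) + w s := by
          by_cases hks : k ≤ s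
          · exact (hm.2 hks).mono (fun m h _ _ => h)
          · exact Eventually.of_forall (fun m h => absurd h hks)
        filter_upwards [E1, E2] with m h1 h2
        exact fun _ => ⟨h1, h2⟩
      · refine Eventually.of_forall (fun m _ => ⟨fun h => absurd h (by omega), ?_⟩)
        exact fun _ h => absurd h ha
    · exact Eventually.of_forall (fun m h => absurd h hso)
  have hall : ∀ᶠ m : ℕ in atTop, ∀ s ∈ Finset.range (2*k), Odd s →
      ((s+2 ≤ k → cfVal (wFin k m s) + w s < cfVal (wFin k m (s+2)) + w (s+2)) ∧
       (k ≤ s → s+2 ≤ 2*k-1 →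
          cfVal (wFin k m (s+2)) + w (s+2) < cfVal (wFin k m s) + w s)) := by
    rw [eventually_all_finset]
    intro s _
    exact hP s
  filter_upwards [hall] with m hm
  intro s hs1 hs2k hsodd
  have hs2k' : s ≤ 2*k-1 := by rcases hsodd with ⟨i, hi⟩; omega
  have Hup : ∀ t, Odd t → t + 2 ≤ k →
      cfVal (wFin k m t) + w t < cfVal (wFin k m (t+2)) + w (t+2) := by
    intro t ht h2
    exact (hm t (Finset.mem_range.mpr (by omega)) ht).1 h2
  have Hdown : ∀ t, Odd t → k ≤ t → t + 2 ≤ 2*k-1 →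
      cfVal (wFin k m (t+2)) + w (t+2) < cfVal (wFin k m t) + w t := by
    intro t ht h1 h2
    exact (hm t (Finset.mem_range.mpr (by omega)) ht).2 h1 h2
  constructor
  · intro hkodd
    by_cases hsk : s ≤ k
    · exact chainUp (fun s => cfVal (wFin k m s) + w s) k hkodd
        (fun t ht h2 => Hup t ht h2) s hsodd hsk
    · exact chainDown (fun s => cfVal (wFin k m s) + w s) k (2*k-1) hkodd
        (fun t ht h1 h2 => Hdown t ht h1 h2) s hsodd (by omega) hs2k'
  · intro hkeven
    rcases hkeven with ⟨j, hj⟩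
    have hk2 : 2 ≤ k := by rcases hsodd with ⟨i, hi⟩; omega
    by_cases hsk : s ≤ k-1
    · refine le_trans ?_ (le_max_left _ _)
      exact chainUp (fun s => cfVal (wFin k m s) + w s) (k-1) ⟨j-1, by omega⟩
        (fun t ht h2 => Hup t ht (by omega)) s hsodd hsk
    · refine le_trans ?_ (le_max_right _ _)
      have hks : k+1 ≤ s := by rcases hsodd with ⟨i, hi⟩; omega
      exact chainDown (fun s => cfVal (wFin k m s) + w s) (k+1) (2*k-1) ⟨j, by omega⟩
        (fun t ht h1 h2 => Hdown t ht (by omega) h2) s hsodd hks hs2k'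
end

section
/- Let φ = (1+√5)/2. Then t·ψ_φ(t) < f₀(t) for every real t ≥ 1; equivalently, ψ_φ(t) < (√5 + 1)/(t(√5 + √(5 − 4/t²))) for all t ≥ 1. -/
open Filter Real

section Stmt14Aux

open Real goldenRatio

private lemma stmt14_bracket (t : ℝ) (ht : 1 ≤ t) :
    ∃ n : ℕ, 2 ≤ n ∧ (Nat.fib n : ℝ) ≤ t ∧ t < (Nat.fib (n + 1) : ℝ) := by
  have hex : ∃ m : ℕ, t < (Nat.fib (m + 3) : ℝ) := by
    refine ⟨⌈t⌉₊ + 2, ?_⟩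
    have h5 : 5 ≤ ⌈t⌉₊ + 5 := by omega
    have hfib : ⌈t⌉₊ + 5 ≤ Nat.fib (⌈t⌉₊ + 5) := Nat.le_fib_self h5
    have h1 : t ≤ (⌈t⌉₊ : ℝ) := Nat.le_ceil t
    have h2 : ((⌈t⌉₊ + 5 : ℕ) : ℝ) ≤ (Nat.fib (⌈t⌉₊ + 5) : ℝ) := by exact_mod_cast hfib
    have h3 : (⌈t⌉₊ + 2) + 3 = ⌈t⌉₊ + 5 := by omega
    rw [h3]
    push_cast at h2 ⊢
    linarith
  classical
  have hm1 : t < (Nat.fib (Nat.find hex + 3) : ℝ) := Nat.find_spec hex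
  refine ⟨Nat.find hex + 2, by omega, ?_, hm1⟩
  rcases Nat.eq_zero_or_pos (Nat.find hex) with h0 | hpos
  · rw [h0]
    have : (Nat.fib (0 + 2) : ℝ) = 1 := by norm_num
    rw [this]; exact ht
  · have hlt : Nat.find hex - 1 < Nat.find hex := Nat.sub_lt hpos one_pos
    have hmin := Nat.find_min hex hlt
    push_neg at hmin
    have heq : Nat.find hex - 1 + 3 = Nat.find hex + 2 := by omega
    rw [heq] at hmin
    exact hmin

private lemma stmt14_psi_le (n : ℕ) (hn : 1 ≤ n) (t : ℝ)
    (hft : (Nat.fib n : ℝ) ≤ t) :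
    psi ((1 + Real.sqrt 5) / 2) t ≤ (goldenRatio⁻¹) ^ n := by
  have hfibpos : 0 < Nat.fib n := Nat.fib_pos.mpr (by omega)
  have hmem : intDist (((Nat.fib n : ℤ) : ℝ) * ((1 + Real.sqrt 5) / 2)) ∈
      {x : ℝ | ∃ q : ℤ, 1 ≤ q ∧ (q : ℝ) ≤ t ∧
        x = intDist ((q : ℝ) * ((1 + Real.sqrt 5) / 2))} := by
    exact ⟨(Nat.fib n : ℤ), by exact_mod_cast hfibpos, by push_cast; exact hft, rfl⟩
  have hbdd : BddBelow {x : ℝ | ∃ q : ℤ, 1 ≤ q ∧ (q : ℝ) ≤ t ∧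
      x = intDist ((q : ℝ) * ((1 + Real.sqrt 5) / 2))} := by
    refine ⟨0, fun x hx => ?_⟩
    obtain ⟨q, _, _, hxeq⟩ := hx
    rw [hxeq]; exact abs_nonneg _
  have h1 : psi ((1 + Real.sqrt 5) / 2) t ≤
      intDist (((Nat.fib n : ℤ) : ℝ) * ((1 + Real.sqrt 5) / 2)) :=
    csInf_le hbdd hmem
  have hgold : ((1 + Real.sqrt 5) / 2 : ℝ) = goldenRatio := rfl
  have h2 : intDist ((Nat.fib n : ℝ) * goldenRatio) ≤
      |(Nat.fib n : ℝ) * goldenRatio - ((Nat.fib (n + 1) : ℤ) : ℝ)| :=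
    round_le _ _
  have h3 : (Nat.fib n : ℝ) * goldenRatio - ((Nat.fib (n + 1) : ℤ) : ℝ) =
      -(goldenConj ^ n) := by
    have := fib_succ_sub_goldenRatio_mul_fib n
    push_cast
    linarith
  have h4 : |(-(goldenConj ^ n) : ℝ)| = (goldenRatio⁻¹) ^ n := by
    rw [abs_neg, abs_pow, abs_of_neg goldenConj_neg, inv_goldenRatio]
  calc psi ((1 + Real.sqrt 5) / 2) t
      ≤ intDist ((Nat.fib n : ℝ) * goldenRatio) := by
        rw [hgold] at h1; exact_mod_cast h1
    _ ≤ |(Nat.fib n : ℝ) * goldenRatio - ((Nat.fib (n + 1) : ℤ) : ℝ)| := h2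
    _ = (goldenRatio⁻¹) ^ n := by rw [h3, h4]

private lemma stmt14_alg (s g x T e m u : ℝ)
    (hs2 : s ^ 2 = 5) (hs_pos : 0 < s)
    (hg : g = (1 + s) / 2)
    (hm_pos : 0 < m)
    (he1 : e ≤ 1) (he2 : -1 ≤ e)
    (hge : g * e ≤ m)
    (hxs : x * s = g + e)
    (hx2 : x ^ 2 = T ^ 2 * m)
    (hT1 : 1 ≤ T)
    (hu : u = Real.sqrt (5 - 4 / T ^ 2)) :
    x * (s + u) ≤ s + 1 := by
  have hs_gt : 2 < s := by nlinarith
  have hg1 : 1 < g := by rw [hg]; linarith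
  have hxs_pos : 0 < x * s := by rw [hxs]; linarith
  have hx_pos : 0 < x := by
    rcases mul_pos_iff.mp hxs_pos with h | h
    · exact h.1
    · linarith [h.2]
  have hT_pos : 0 < T := by linarith
  have hT2_pos : 0 < T ^ 2 := by positivity
  have hdiv : 4 / T ^ 2 ≤ 4 := by
    rw [div_le_iff₀ hT2_pos]; nlinarith
  have hu0 : 0 ≤ u := by rw [hu]; exact Real.sqrt_nonneg _
  have hu2 : u ^ 2 = 5 - 4 / T ^ 2 := by
    rw [hu]; exact Real.sq_sqrt (by linarith)
  have h3 : 5 * x ^ 2 = (g + e) ^ 2 := by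
    linear_combination (x * s + g + e) * hxs - x ^ 2 * hs2
  have h2 : (5 - 4 / T ^ 2) * x ^ 2 = 5 * x ^ 2 - 4 * m := by
    rw [hx2]
    field_simp
  have hux2 : (u * x) ^ 2 = (g + e) ^ 2 - 4 * m := by
    have h1 : (u * x) ^ 2 = u ^ 2 * x ^ 2 := by ring
    rw [h1, hu2, h2, h3]
  have hge0 : 0 ≤ g - e := by linarith
  have hux_le : u * x ≤ g - e := by
    have hsq : (u * x) ^ 2 ≤ (g - e) ^ 2 := by nlinarith [hge]
    calc u * x = Real.sqrt ((u * x) ^ 2) := (Real.sqrt_sq (by positivity)).symm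
      _ ≤ Real.sqrt ((g - e) ^ 2) := Real.sqrt_le_sqrt hsq
      _ = g - e := Real.sqrt_sq hge0
  nlinarith [hxs, hux_le]

private lemma stmt14_endpoint (n : ℕ) :
    (Nat.fib (n + 1) : ℝ) * (goldenRatio⁻¹) ^ n *
      (Real.sqrt 5 + Real.sqrt (5 - 4 / (Nat.fib (n + 1) : ℝ) ^ 2)) ≤
    Real.sqrt 5 + 1 := by
  have hs2 : Real.sqrt 5 ^ 2 = 5 := Real.sq_sqrt (by norm_num)
  have hs_pos : 0 < Real.sqrt 5 := Real.sqrt_pos.mpr (by norm_num)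
  have hg_eq : goldenRatio = (1 + Real.sqrt 5) / 2 := rfl
  have hg1 : (1 : ℝ) < goldenRatio := one_lt_goldenRatio
  have hgc : goldenRatio * goldenRatio⁻¹ = 1 := mul_inv_cancel₀ goldenRatio_ne_zero
  have hc_pos : (0 : ℝ) < goldenRatio⁻¹ := inv_pos.mpr goldenRatio_pos
  have hc1 : (goldenRatio⁻¹ : ℝ) < 1 := inv_lt_one_of_one_lt₀ hg1
  have hψc : (goldenConj : ℝ) = -goldenRatio⁻¹ := by
    have h := inv_goldenRatio; linarith
  have hT1 : (1 : ℝ) ≤ (Nat.fib (n + 1) : ℝ) := by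
    have h : 1 ≤ Nat.fib (n + 1) := Nat.fib_pos.mpr (by omega)
    exact_mod_cast h
  have hTs : (Nat.fib (n + 1) : ℝ) * Real.sqrt 5 =
      goldenRatio ^ (n + 1) - (-goldenRatio⁻¹) ^ (n + 1) := by
    rw [Real.coe_fib_eq (n + 1), hψc, div_mul_cancel₀ _ (ne_of_gt hs_pos)]
  have hm_pos : (0 : ℝ) < goldenRatio⁻¹ ^ (2 * n) := pow_pos hc_pos _
  have hcm_le : (goldenRatio⁻¹ : ℝ) ^ (2 * n + 1) ≤ 1 :=
    pow_le_one₀ hc_pos.le hc1.le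
  have hneg1 : ((-1 : ℝ)) ^ n ≤ 1 := by
    rcases Nat.even_or_odd n with h | h
    · rw [h.neg_one_pow]
    · rw [h.neg_one_pow]; norm_num
  have hneg1' : (-1 : ℝ) ≤ ((-1 : ℝ)) ^ n := by
    rcases Nat.even_or_odd n with h | h
    · rw [h.neg_one_pow]; norm_num
    · rw [h.neg_one_pow]
  have habs : |((-1 : ℝ)) ^ n| = 1 := by
    rw [abs_pow, abs_neg, abs_one, one_pow]
  have he1 : ((-1 : ℝ)) ^ n * goldenRatio⁻¹ ^ (2 * n + 1) ≤ 1 := by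
    calc ((-1 : ℝ)) ^ n * goldenRatio⁻¹ ^ (2 * n + 1)
        ≤ |((-1 : ℝ)) ^ n * goldenRatio⁻¹ ^ (2 * n + 1)| := le_abs_self _
      _ = goldenRatio⁻¹ ^ (2 * n + 1) := by
          rw [abs_mul, habs, one_mul, abs_of_pos (pow_pos hc_pos _)]
      _ ≤ 1 := hcm_le
  have he2 : (-1 : ℝ) ≤ ((-1 : ℝ)) ^ n * goldenRatio⁻¹ ^ (2 * n + 1) := by
    have h := neg_abs_le (((-1 : ℝ)) ^ n * goldenRatio⁻¹ ^ (2 * n + 1))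
    have heq : |((-1 : ℝ)) ^ n * goldenRatio⁻¹ ^ (2 * n + 1)| =
        goldenRatio⁻¹ ^ (2 * n + 1) := by
      rw [abs_mul, habs, one_mul, abs_of_pos (pow_pos hc_pos _)]
    rw [heq] at h
    linarith [hcm_le]
  have hge : goldenRatio * (((-1 : ℝ)) ^ n * goldenRatio⁻¹ ^ (2 * n + 1)) ≤
      goldenRatio⁻¹ ^ (2 * n) := by
    have h1 : goldenRatio * (((-1 : ℝ)) ^ n * goldenRatio⁻¹ ^ (2 * n + 1)) =
        ((-1 : ℝ)) ^ n * goldenRatio⁻¹ ^ (2 * n) := by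
      rw [pow_succ]
      calc goldenRatio * (((-1 : ℝ)) ^ n * (goldenRatio⁻¹ ^ (2 * n) * goldenRatio⁻¹))
          = ((-1 : ℝ)) ^ n * goldenRatio⁻¹ ^ (2 * n) *
            (goldenRatio * goldenRatio⁻¹) := by ring
        _ = ((-1 : ℝ)) ^ n * goldenRatio⁻¹ ^ (2 * n) := by rw [hgc, mul_one]
    rw [h1]
    nlinarith [hm_pos, hneg1]
  have hxs : ((Nat.fib (n + 1) : ℝ) * goldenRatio⁻¹ ^ n) * Real.sqrt 5 =
      goldenRatio + ((-1 : ℝ)) ^ n * goldenRatio⁻¹ ^ (2 * n + 1) := by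
    have h1 : ((Nat.fib (n + 1) : ℝ) * goldenRatio⁻¹ ^ n) * Real.sqrt 5 =
        (goldenRatio ^ (n + 1) - (-goldenRatio⁻¹) ^ (n + 1)) * goldenRatio⁻¹ ^ n := by
      rw [← hTs]; ring
    have h2 : goldenRatio ^ (n + 1) * goldenRatio⁻¹ ^ n = goldenRatio := by
      have h : goldenRatio ^ (n + 1) * goldenRatio⁻¹ ^ n =
          goldenRatio * (goldenRatio * goldenRatio⁻¹) ^ n := by
        rw [mul_pow]; ring
      rw [h, hgc, one_pow, mul_one]
    have hcc : (goldenRatio⁻¹ : ℝ) ^ (n + 1) * goldenRatio⁻¹ ^ n =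
        goldenRatio⁻¹ ^ (2 * n + 1) := by
      rw [← pow_add]; ring_nf
    have h3 : (-goldenRatio⁻¹ : ℝ) ^ (n + 1) * goldenRatio⁻¹ ^ n =
        -(((-1 : ℝ)) ^ n * goldenRatio⁻¹ ^ (2 * n + 1)) := by
      linear_combination ((-1 : ℝ) ^ (n + 1)) * hcc
    rw [h1, sub_mul, h2, h3]
    ring
  have hx2 : ((Nat.fib (n + 1) : ℝ) * goldenRatio⁻¹ ^ n) ^ 2 =
      (Nat.fib (n + 1) : ℝ) ^ 2 * goldenRatio⁻¹ ^ (2 * n) := by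
    rw [mul_pow, ← pow_mul]
    ring_nf
  have := stmt14_alg (Real.sqrt 5) goldenRatio
    ((Nat.fib (n + 1) : ℝ) * goldenRatio⁻¹ ^ n) (Nat.fib (n + 1) : ℝ)
    (((-1 : ℝ)) ^ n * goldenRatio⁻¹ ^ (2 * n + 1)) (goldenRatio⁻¹ ^ (2 * n))
    (Real.sqrt (5 - 4 / (Nat.fib (n + 1) : ℝ) ^ 2))
    hs2 hs_pos hg_eq hm_pos he1 he2 hge hxs hx2 hT1 rfl
  linarith [this]

end Stmt14Aux


/-- For `φ = (1+√5)/2` one has `t·ψ_φ(t) < f₀(t)` for every `t ≥ 1`. -/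
theorem dirichlet_discrete_stmt14 (t : ℝ) (ht : 1 ≤ t) :
    t * psi ((1 + Real.sqrt 5) / 2) t < f0 t := by
  obtain ⟨n, hn2, hfl, hfu⟩ := stmt14_bracket t ht
  have hc_pos : 0 < (goldenRatio⁻¹ : ℝ) := inv_pos.mpr goldenRatio_pos
  have hcn_pos : 0 < (goldenRatio⁻¹ : ℝ) ^ n := pow_pos hc_pos n
  have hpsi := stmt14_psi_le n (by omega) t hfl
  have ht0 : 0 < t := by linarith
  set T : ℝ := (Nat.fib (n + 1) : ℝ) with hT_def
  have hT0 : 0 < T := by linarith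
  have hs_pos : 0 < Real.sqrt 5 := Real.sqrt_pos.mpr (by norm_num)
  have hd_pos : 0 < Real.sqrt 5 + Real.sqrt (5 - 4 / t ^ 2) := by
    have := Real.sqrt_nonneg (5 - 4 / t ^ 2)
    linarith
  have hmono : Real.sqrt (5 - 4 / t ^ 2) ≤ Real.sqrt (5 - 4 / T ^ 2) := by
    apply Real.sqrt_le_sqrt
    have h2 : 4 / T ^ 2 ≤ 4 / t ^ 2 := by
      rw [div_le_div_iff₀ (by positivity) (by positivity)]
      nlinarith
    linarith
  have key : t * goldenRatio⁻¹ ^ n * (Real.sqrt 5 + Real.sqrt (5 - 4 / t ^ 2)) <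
      Real.sqrt 5 + 1 := by
    calc t * goldenRatio⁻¹ ^ n * (Real.sqrt 5 + Real.sqrt (5 - 4 / t ^ 2))
        < T * goldenRatio⁻¹ ^ n * (Real.sqrt 5 + Real.sqrt (5 - 4 / T ^ 2)) := by
          apply mul_lt_mul
          · exact mul_lt_mul_of_pos_right hfu hcn_pos
          · linarith
          · exact hd_pos
          · positivity
      _ ≤ Real.sqrt 5 + 1 := stmt14_endpoint n
  have hfeq : f0 t = (Real.sqrt 5 + 1) / (Real.sqrt 5 + Real.sqrt (5 - 4 / t ^ 2)) := rfl
  rw [hfeq, lt_div_iff₀ hd_pos]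
  have h1 : t * psi ((1 + Real.sqrt 5) / 2) t ≤ t * goldenRatio⁻¹ ^ n :=
    mul_le_mul_of_nonneg_left hpsi ht0.le
  calc t * psi ((1 + Real.sqrt 5) / 2) t * (Real.sqrt 5 + Real.sqrt (5 - 4 / t ^ 2))
      ≤ t * goldenRatio⁻¹ ^ n * (Real.sqrt 5 + Real.sqrt (5 - 4 / t ^ 2)) :=
        mul_le_mul_of_nonneg_right h1 hd_pos.le
    _ < Real.sqrt 5 + 1 := key
end
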